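/- arXiv:2011.10791 — 7 statements merged into one kernel-verified Lean document; each statement's English description precedes it below -/
import Mathlib

section
/- Let G be a balanced bipartite graph with parts X, Y and S ⊆ X. Let C = x_1 y_1 ⋯ x_m y_m x_1 be a cycle of G with x_i ∈ X, |C| = 2m ≥ 6, and |S ∩ V(C)| ≥ 2, such that G contains no feasible cycle shorter than C (i.e., C is a minimal system). Then for any vertex y ∈ Y \ V(C), the number of neighbors of y on C is at most |C|/2 − 1. -/
/-!
If `y` were adjacent to two `S`-vertices `a ≠ b` of `C`, the shorter of the two arcs of `C`
between `a` and `b` has length at most `|C|/2`, and closing it up through `y` gives a feasible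
cycle of length at most `|C|/2 + 2 < |C|` (as `|C| ≥ 6`), contradicting minimality. So some
`S`-vertex of `C` is not a neighbour of `y`; since all neighbours of `y` lie in `X` and `C` has
exactly `|C|/2` vertices in `X`, the bound follows.
-/

open SimpleGraph Walk

namespace SimpleGraph

variable {V : Type*} {G : SimpleGraph V} {u v : V}

section Bipartite

variable {s t : Set V}

theorem IsBipartiteWith.mem_left_iff_notMem_left (hB : G.IsBipartiteWith s t) {a b : V}
    (hab : G.Adj a b) : a ∈ s ↔ b ∉ s := by
  rcases hB.mem_of_adj hab with ⟨ha, hb⟩ | ⟨ha, hb⟩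
  · exact iff_of_true ha (hB.disjoint.notMem_of_mem_right hb)
  · exact iff_of_false (hB.disjoint.notMem_of_mem_right ha) (not_not_intro hb)

/- Every dart has exactly one end in `s`, and on a closed walk the first ends and the second ends
of the darts are the same vertices up to permutation. -/
theorem IsBipartiteWith.two_mul_countP_support_tail (hB : G.IsBipartiteWith s t)
    [DecidablePred (· ∈ s)] (c : G.Walk u u) :
    2 * c.support.tail.countP (· ∈ s) = c.length := by
  have hfst : c.support.tail.countP (· ∈ s) = c.darts.countP (·.fst ∈ s) := by
    rw [(tail_support_perm_dropLast_support c).countP_eq, ← map_fst_darts, List.countP_map]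
    rfl
  have hsnd : c.support.tail.countP (· ∈ s) = c.darts.countP (fun d => d.fst ∉ s) := by
    rw [← map_snd_darts, List.countP_map]
    refine List.countP_congr fun d _ => ?_
    simpa using (hB.mem_left_iff_notMem_left d.adj).not_left.symm
  rw [← length_darts, List.length_eq_countP_add_countP (·.fst ∈ s), two_mul]
  nth_rw 1 [hfst, hsnd]
  simp

theorem Walk.IsCycle.two_mul_card_filter_support [DecidableEq V] (hB : G.IsBipartiteWith s t)
    [DecidablePred (· ∈ s)] {c : G.Walk u u} (hc : c.IsCycle) :
    2 * (c.support.toFinset.filter (· ∈ s)).card = c.length := by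
  rw [← cons_tail_support, List.toFinset_cons, Finset.insert_eq_of_mem
    (List.mem_toFinset.mpr (end_mem_tail_support hc.not_nil)),
    hc.support_nodup.card_eq_countP, hB.two_mul_countP_support_tail]

end Bipartite

namespace Walk

theorem IsPath.cons_concat_isCycle {a b y : V} {p : G.Walk a b} (hp : p.IsPath) (hab : a ≠ b)
    (hy : y ∉ p.support) (hya : G.Adj y a) (hby : G.Adj b y) :
    (cons hya (p.concat hby)).IsCycle := by
  refine (cons_isCycle_iff _ _).mpr ⟨hp.concat hy hby, fun he => ?_⟩
  rw [edges_concat, List.concat_eq_append, List.mem_append, List.mem_singleton, Sym2.eq_iff]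
    at he
  rcases he with he | ⟨rfl, -⟩ | ⟨-, rfl⟩
  · exact hy (p.fst_mem_support_of_mem_edges he)
  · exact hy p.end_mem_support
  · exact hab rfl

variable [DecidableEq V]

theorem IsCycle.exists_isPath_two_mul_length_le {c : G.Walk v v} (hc : c.IsCycle) {a b : V}
    (ha : a ∈ c.support) (hb : b ∈ c.support) :
    ∃ p : G.Walk a b, p.IsPath ∧ p.support ⊆ c.support ∧ 2 * p.length ≤ c.length := by
  set c' := c.rotate a ha
  have hc' : c'.IsCycle := hc.rotate ha
  have hb' : b ∈ c'.support := (mem_support_rotate_iff c a ha).mpr hb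
  have hsupp : c'.support ⊆ c.support := fun w => (mem_support_rotate_iff c a ha).mp
  have hlen : (c'.takeUntil b hb').length + (c'.dropUntil b hb').length = c.length := by
    rw [← length_append, take_spec, length_rotate]
  by_cases htake : 2 * (c'.takeUntil b hb').length ≤ c.length
  · exact ⟨_, hc'.isPath_takeUntil hb',
      fun w hw => hsupp (support_takeUntil_subset_support _ _ hw), htake⟩
  · have hne : ¬(c'.takeUntil b hb').Nil := fun h => htake (by simp [length_eq_zero_iff.mpr h])
    refine ⟨(c'.dropUntil b hb').reverse, ?_, ?_, by rw [length_reverse]; omega⟩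
    · exact (IsCycle.isPath_of_append_right hne (by rwa [take_spec])).reverse
    · rw [support_reverse]
      exact fun w hw => hsupp (support_dropUntil_subset_support _ _ (List.mem_reverse.mp hw))

theorem IsCycle.exists_isCycle_two_mul_length_le_of_adj {c : G.Walk v v} (hc : c.IsCycle)
    {a b y : V} (ha : a ∈ c.support) (hb : b ∈ c.support) (hab : a ≠ b) (hy : y ∉ c.support)
    (hya : G.Adj y a) (hyb : G.Adj y b) :
    ∃ w : G.Walk y y, w.IsCycle ∧ 2 * w.length ≤ c.length + 4 ∧
      a ∈ w.support ∧ b ∈ w.support := by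
  obtain ⟨p, hp, hpc, hplen⟩ := hc.exists_isPath_two_mul_length_le ha hb
  exact ⟨cons hya (p.concat hyb.symm), hp.cons_concat_isCycle hab (fun h => hy (hpc h)) hya _,
    by rw [length_cons, length_concat]; omega, by simp, by simp⟩

end Walk

end SimpleGraph

theorem deg_on_minimal_cycle_general {V : Type*} [DecidableEq V]
    (G : SimpleGraph V) [DecidableRel G.Adj]
    (X Y S : Finset V)
    (hdisj : Disjoint X Y)
    (hbip : ∀ u v : V, G.Adj u v → (u ∈ X ∧ v ∈ Y) ∨ (u ∈ Y ∧ v ∈ X))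
    (hSX : S ⊆ X)
    (v : V) (c : G.Walk v v) (hc : c.IsCycle)
    (hlen : 6 ≤ c.length)
    (hfeas : 2 ≤ (S ∩ c.support.toFinset).card)
    (hmin : ∀ (u : V) (c' : G.Walk u u), c'.IsCycle →
      2 ≤ (S ∩ c'.support.toFinset).card → c.length ≤ c'.length)
    (y : V) (hy : y ∈ Y) (hyc : y ∉ c.support) :
    (c.support.toFinset.filter (fun u => G.Adj y u)).card ≤ c.length / 2 - 1 := by
  have hB : G.IsBipartiteWith X Y := ⟨Finset.disjoint_coe.mpr hdisj, hbip⟩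
  obtain ⟨a, ha, b, hb, hab⟩ := Finset.one_lt_card.mp hfeas
  simp only [Finset.mem_inter, List.mem_toFinset] at ha hb
  obtain ⟨z, hzS, hzc, hyz⟩ : ∃ z ∈ S, z ∈ c.support ∧ ¬G.Adj y z := by
    by_contra! hadj
    obtain ⟨w, hw, hwlen, haw, hbw⟩ := hc.exists_isCycle_two_mul_length_le_of_adj ha.2 hb.2 hab
      hyc (hadj a ha.1 ha.2) (hadj b hb.1 hb.2)
    have hwmin := hmin y w hw (Finset.one_lt_card.mpr
      ⟨a, by simp [ha.1, haw], b, by simp [hb.1, hbw], hab⟩)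
    omega
  have hnbr : c.support.toFinset.filter (fun u => G.Adj y u) ⊆
      (c.support.toFinset.filter (· ∈ (X : Set V))).erase z := by
    intro u hu
    simp only [Finset.mem_filter] at hu
    exact Finset.mem_erase.mpr ⟨fun h => hyz (h ▸ hu.2),
      Finset.mem_filter.mpr ⟨hu.1, hB.symm.mem_of_mem_adj hy hu.2⟩⟩
  have hzX : z ∈ c.support.toFinset.filter (· ∈ (X : Set V)) := by simp [hzc, hSX hzS]
  have hcard := hc.two_mul_card_filter_support hB
  have hle := Finset.card_le_card hnbr
  rw [Finset.card_erase_of_mem hzX] at hle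
  omega

/-- Lemma 1(2): for a minimal feasible cycle C of length ≥ 6 in a bipartite
graph and a vertex y ∈ Y off C, we have d_C(y) ≤ |C|/2 - 1. -/
theorem deg_on_minimal_cycle {V : Type*} [Fintype V] [DecidableEq V]
    (G : SimpleGraph V) [DecidableRel G.Adj]
    (X Y S : Finset V)
    (hdisj : Disjoint X Y) (hcover : X ∪ Y = Finset.univ)
    (hbip : ∀ u v : V, G.Adj u v → (u ∈ X ∧ v ∈ Y) ∨ (u ∈ Y ∧ v ∈ X))
    (hSX : S ⊆ X)
    (v : V) (c : G.Walk v v) (hc : c.IsCycle)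
    (hlen : 6 ≤ c.length)
    (hfeas : 2 ≤ (S ∩ c.support.toFinset).card)
    (hmin : ∀ (u : V) (c' : G.Walk u u), c'.IsCycle →
      2 ≤ (S ∩ c'.support.toFinset).card → c.length ≤ c'.length)
    (y : V) (hy : y ∈ Y) (hyc : y ∉ c.support) :
    (c.support.toFinset.filter (fun u => G.Adj y u)).card ≤ c.length / 2 - 1 :=
  deg_on_minimal_cycle_general G X Y S hdisj hbip hSX v c hc hlen hfeas hmin y hy hyc
end

section
/- Let G be a balanced bipartite graph with parts X, Y and S ⊆ X. Let C be a feasible cycle that is a minimal system of G (no shorter feasible cycle exists in G), with |C| ≥ 6. If x ∈ S \ V(C) and y ∈ Y \ V(C) are adjacent, then the number of edges from {x, y} to C is at most |C|/2. -/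
/-!
Index the cycle `C` by `ZMod n` and let `A`, `B`, `T` be the positions of the neighbours of `x`,
the neighbours of `y` and the vertices of `S`. An arc of `C` joining two neighbours of `x` closes
up through `x` (through `x` and `y` when it joins a neighbour of `x` to a neighbour of `y`) into a
cycle that is feasible as soon as the arc meets `S`; by minimality such an arc has length at least
`n - 2` (resp. `n - 3`). Hence `|A| ≤ 2`, and a vertex of `B ∩ T` is antipodal to every vertex of
`A`, with `n = 6`. Together with `|T| ≥ 2` this gives `|A| ≤ |T \ B|`, and since `T ∪ B` lies in
the colour class `X`, which contains half the vertices of `C`,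
`|A| + |B| ≤ |T \ B| + |B| = |T ∪ B| ≤ n / 2`.
-/

open Finset

namespace ZMod

variable {n : ℕ}

lemma val_sub_add_val_sub [NeZero n] {a b : ZMod n} (h : a ≠ b) :
    (a - b).val + (b - a).val = n := by
  have hba : b - a ≠ 0 := sub_ne_zero_of_ne h.symm
  rw [← neg_sub b a, neg_val, if_neg hba]
  have := val_lt (b - a)
  omega

lemma two_mul_card_le_of_add_one_notMem [NeZero n] {W : Finset (ZMod n)} (hW : ∀ i ∈ W, i + 1 ∉ W) :
    2 * #W ≤ n := by
  have hdisj : Disjoint W (W.image (· + 1)) := by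
    rw [disjoint_right]
    rintro _ himg hi1
    obtain ⟨i, hi, rfl⟩ := mem_image.1 himg
    exact hW i hi hi1
  calc 2 * #W = #(W ∪ W.image (· + 1)) := by
        rw [card_union_of_disjoint hdisj, card_image_of_injective _ (add_left_injective 1)]; ring
    _ ≤ n := (card_le_univ _).trans_eq (card n)

variable {P : ZMod n → Prop}

lemma add_natCast_iff_of_alternating (hP : ∀ i, P (i + 1) ↔ ¬P i) (i : ZMod n) (r : ℕ) :
    P (i + r) ↔ (Even r ↔ P i) := by
  induction r with
  | zero => simp
  | succ r ih => rw [Nat.cast_succ, ← add_assoc, hP, ih, Nat.even_add_one]; tauto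

lemma odd_val_sub_of_alternating [NeZero n] (hP : ∀ i, P (i + 1) ↔ ¬P i) {i j : ZMod n}
    (hi : P i) (hj : ¬P j) :
    Odd (j - i).val := by
  have := add_natCast_iff_of_alternating hP i (j - i).val
  rw [natCast_zmod_val, add_sub_cancel] at this
  rw [← Nat.not_even_iff_odd]
  tauto

lemma val_sub_eq_three [NeZero n] (hn : 6 ≤ n) {a b : ZMod n} (hab : a ≠ b)
    (h₁ : n ≤ (b - a).val + 3) (h₂ : n ≤ (a - b).val + 3) : (b - a).val = 3 := by
  have := val_sub_add_val_sub hab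
  omega

lemma card_le_two_of_arcs_through [NeZero n] (hP : ∀ i, P (i + 1) ↔ ¬P i)
    {A : Finset (ZMod n)} {t : ZMod n} (ht : P t) (hA : ∀ a ∈ A, ¬P a)
    (hAA : ∀ a ∈ A, ∀ a' ∈ A, a ≠ a' → (t - a).val ≤ (a' - a).val → n ≤ (a' - a).val + 2) :
    #A ≤ 2 := by
  -- Measured from `t`, two points of `A` are at most 2 apart: the arc from the farther one
  -- forward to the nearer one passes through `t`. The distances are odd, so at most two occur.
  have hgap : ∀ a ∈ A, ∀ a' ∈ A, (a - t).val < (a' - t).val → (a' - t).val ≤ (a - t).val + 2 := by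
    intro a ha a' ha' hlt
    have hne : a' ≠ a := fun h => hlt.ne (by rw [h])
    have h₁ : (a' - a).val = (a' - t).val - (a - t).val := by
      rw [show a' - a = (a' - t) - (a - t) by ring]
      exact val_sub hlt.le
    have h₂ := val_sub_add_val_sub hne
    have h₃ := val_sub_add_val_sub (show t ≠ a' from fun h => hA a' ha' (h ▸ ht))
    have := hAA a' ha' a ha hne (by omega)
    omega
  have hodd : ∀ a ∈ A, ∃ k, (a - t).val = 2 * k + 1 := fun a ha =>
    odd_val_sub_of_alternating hP ht (hA a ha)
  have hinj : ∀ a b : ZMod n, a ≠ b → (a - t).val ≠ (b - t).val :=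
    fun a b hab h => hab (sub_left_inj.1 (val_injective n h))
  by_contra! h
  obtain ⟨a, b, c, ha, hb, hc, hab, hac, hbc⟩ := two_lt_card_iff.1 h
  obtain ⟨ka, hka⟩ := hodd a ha
  obtain ⟨kb, hkb⟩ := hodd b hb
  obtain ⟨kc, hkc⟩ := hodd c hc
  have := hgap a ha b hb; have := hgap b hb a ha; have := hgap a ha c hc
  have := hgap c hc a ha; have := hgap b hb c hc; have := hgap c hc b hb
  have := hinj a b hab; have := hinj a c hac; have := hinj b c hbc
  omega

theorem card_add_card_le_div_two [NeZero n] (hn : 6 ≤ n) (hP : ∀ i, P (i + 1) ↔ ¬P i)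
    {A B T : Finset (ZMod n)} (hA : ∀ a ∈ A, ¬P a) (hB : ∀ b ∈ B, P b) (hT : ∀ t ∈ T, P t)
    (hT₂ : 2 ≤ #T)
    (hAA : ∀ a ∈ A, ∀ a' ∈ A, a ≠ a' → ∀ t ∈ T, (t - a).val ≤ (a' - a).val →
      n ≤ (a' - a).val + 2)
    (hAB : ∀ a ∈ A, ∀ b ∈ T ∩ B, n ≤ (b - a).val + 3 ∧ n ≤ (a - b).val + 3) :
    #A + #B ≤ n / 2 := by
  obtain ⟨t, ht⟩ : T.Nonempty := card_pos.1 (by omega)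
  have hA₂ : #A ≤ 2 := card_le_two_of_arcs_through hP (hT t ht) hA
    fun a ha a' ha' hne => hAA a ha a' ha' hne t ht
  have hanti : ∀ a ∈ A, ∀ b ∈ T ∩ B, (b - a).val = 3 := fun a ha b hb =>
    val_sub_eq_three hn (fun h => hA a ha (h ▸ hB b (mem_inter.1 hb).2)) (hAB a ha b hb).1
      (hAB a ha b hb).2
  have hA_le : #A ≤ #(T \ B) := by
    rcases A.eq_empty_or_nonempty with rfl | ⟨a, ha⟩
    · simp
    have : #A + #(T ∩ B) ≤ 2 := by
      rcases (T ∩ B).eq_empty_or_nonempty with h | ⟨b, hb⟩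
      · simpa [h] using hA₂
      have h₁ : #A ≤ 1 := card_le_one.2 fun a₁ h₁ a₂ h₂ =>
        sub_right_inj.1 (val_injective n ((hanti a₁ h₁ b hb).trans (hanti a₂ h₂ b hb).symm))
      have h₂ : #(T ∩ B) ≤ 1 := card_le_one.2 fun b₁ h₁ b₂ h₂ =>
        sub_left_inj.1 (val_injective n ((hanti a ha b₁ h₁).trans (hanti a ha b₂ h₂).symm))
      omega
    rw [card_sdiff, inter_comm]
    omega
  have hTB : 2 * #(T ∪ B) ≤ n := two_mul_card_le_of_add_one_notMem fun i hi hi₁ => by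
    have hPi : ∀ j ∈ T ∪ B, P j := fun j hj => (mem_union.1 hj).elim (hT j) (hB j)
    exact (hP i).1 (hPi _ hi₁) (hPi i hi)
  have := card_sdiff_add_card T B
  omega

end ZMod

namespace SimpleGraph

variable {V : Type*} {G : SimpleGraph V}

lemma Walk.IsPath.isCycle_cons_concat {a b x : V} {P : G.Walk a b} (hP : P.IsPath) (hab : a ≠ b)
    (hx : x ∉ P.support) (hxa : G.Adj x a) (hbx : G.Adj b x) :
    (Walk.cons hxa (P.concat hbx)).IsCycle := by
  rw [Walk.cons_isCycle_iff]
  refine ⟨hP.concat hx hbx, fun he => ?_⟩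
  rw [Walk.edges_concat, List.concat_eq_append, List.mem_append, List.mem_singleton,
    Sym2.eq_iff] at he
  rcases he with he | ⟨rfl, _⟩ | ⟨-, rfl⟩
  · exact hx (Walk.fst_mem_support_of_mem_edges P he)
  · exact hx P.end_mem_support
  · exact hab rfl

section CyclicArc

variable {n : ℕ} {f : ZMod n → V} (hf : ∀ i, G.Adj (f i) (f (i + 1)))

def cyclicArc (i : ZMod n) : (m : ℕ) → G.Walk (f i) (f (i + m))
  | 0 => Walk.nil.copy rfl (by simp)
  | m + 1 => ((cyclicArc i m).concat (hf _)).copy rfl (by rw [Nat.cast_succ, add_assoc])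

@[simp]
lemma length_cyclicArc (i : ZMod n) (m : ℕ) : (cyclicArc hf i m).length = m := by
  induction m with
  | zero => simp [cyclicArc]
  | succ m ih => simp [cyclicArc, ih]

lemma support_cyclicArc (i : ZMod n) (m : ℕ) :
    (cyclicArc hf i m).support = (List.range (m + 1)).map fun r : ℕ => f (i + r) := by
  induction m with
  | zero => simp [cyclicArc]
  | succ m ih => simp [cyclicArc, ih, List.range_succ (n := m + 1), add_assoc]

lemma isPath_cyclicArc (hinj : Function.Injective f) (i : ZMod n) {m : ℕ} (hm : m < n) :
    (cyclicArc hf i m).IsPath := by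
  rw [Walk.isPath_def, support_cyclicArc]
  refine List.Nodup.map_on (fun r hr r' hr' h => ?_) List.nodup_range
  rw [List.mem_range] at hr hr'
  have := congrArg ZMod.val (add_left_cancel (hinj h))
  rwa [ZMod.val_natCast_of_lt (by omega), ZMod.val_natCast_of_lt (by omega)] at this

variable [NeZero n]

def cyclicArcTo (i j : ZMod n) : G.Walk (f i) (f j) :=
  (cyclicArc hf i (j - i).val).copy rfl (by rw [ZMod.natCast_zmod_val, add_sub_cancel])

@[simp]
lemma length_cyclicArcTo (i j : ZMod n) : (cyclicArcTo hf i j).length = (j - i).val := by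
  simp [cyclicArcTo]

lemma isPath_cyclicArcTo (hinj : Function.Injective f) (i j : ZMod n) :
    (cyclicArcTo hf i j).IsPath := by
  rw [cyclicArcTo, Walk.isPath_copy]
  exact isPath_cyclicArc hf hinj i (ZMod.val_lt _)

lemma mem_range_of_mem_support_cyclicArcTo {i j : ZMod n} {u : V}
    (hu : u ∈ (cyclicArcTo hf i j).support) : u ∈ Set.range f := by
  rw [cyclicArcTo, Walk.support_copy, support_cyclicArc, List.mem_map] at hu
  obtain ⟨r, -, rfl⟩ := hu
  exact ⟨_, rfl⟩

lemma mem_support_cyclicArcTo {i j t : ZMod n} (ht : (t - i).val ≤ (j - i).val) :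
    f t ∈ (cyclicArcTo hf i j).support := by
  rw [cyclicArcTo, Walk.support_copy, support_cyclicArc, List.mem_map]
  refine ⟨(t - i).val, List.mem_range.2 (Nat.lt_succ_of_le ht), ?_⟩
  rw [ZMod.natCast_zmod_val, add_sub_cancel]

end CyclicArc

section CycleParametrization

variable {u : V} (c : G.Walk u u)

lemma Walk.getVert_val_natCast {k : ℕ} (hk : k ≤ c.length) :
    c.getVert (k : ZMod c.length).val = c.getVert k := by
  rw [ZMod.val_natCast]
  rcases hk.lt_or_eq with hk | rfl
  · rw [Nat.mod_eq_of_lt hk]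
  · simp

lemma Walk.adj_getVert_val_add_one [NeZero c.length] (i : ZMod c.length) :
    G.Adj (c.getVert i.val) (c.getVert (i + 1).val) := by
  have : i + 1 = ((i.val + 1 : ℕ) : ZMod c.length) := by push_cast [ZMod.natCast_zmod_val]; rfl
  rw [this, c.getVert_val_natCast (ZMod.val_lt i)]
  exact c.adj_getVert_succ (ZMod.val_lt i)

lemma Walk.IsCycle.injective_getVert_val {c : G.Walk u u} [NeZero c.length] (hc : c.IsCycle) :
    Function.Injective fun i : ZMod c.length => c.getVert i.val := fun i j h => by
  have hi := ZMod.val_lt i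
  have hj := ZMod.val_lt j
  exact ZMod.val_injective _ (hc.getVert_injOn' (by simp; omega) (by simp; omega) h)

lemma Walk.support_toFinset_eq_image [DecidableEq V] [NeZero c.length] :
    c.support.toFinset = univ.image fun i : ZMod c.length => c.getVert i.val := by
  ext w
  simp only [List.mem_toFinset, Walk.mem_support_iff_exists_getVert, mem_image, mem_univ, true_and]
  constructor
  · rintro ⟨k, rfl, hk⟩
    exact ⟨k, c.getVert_val_natCast hk⟩
  · rintro ⟨i, rfl⟩
    exact ⟨i.val, rfl, (ZMod.val_lt i).le⟩

lemma Walk.IsCycle.card_filter_support_toFinset [DecidableEq V] {c : G.Walk u u}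
    [NeZero c.length] (hc : c.IsCycle) (p : V → Prop) [DecidablePred p] :
    #(c.support.toFinset.filter p) =
      #(univ.filter fun i : ZMod c.length => p (c.getVert i.val)) := by
  rw [c.support_toFinset_eq_image, filter_image,
    card_image_of_injective _ hc.injective_getVert_val]

end CycleParametrization

lemma mem_iff_notMem_of_adj {X Y : Finset V} (hdisj : Disjoint X Y)
    (hbip : ∀ u v : V, G.Adj u v → (u ∈ X ∧ v ∈ Y) ∨ (u ∈ Y ∧ v ∈ X)) {u v : V} (h : G.Adj u v) :
    u ∈ X ↔ v ∉ X := by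
  rcases hbip u v h with ⟨hu, hv⟩ | ⟨hu, hv⟩
  · exact ⟨fun _ hvX => Finset.disjoint_left.1 hdisj hvX hv, fun _ => hu⟩
  · exact ⟨fun huX => (Finset.disjoint_left.1 hdisj huX hu).elim, fun hvX => (hvX hv).elim⟩

variable [DecidableEq V] {S : Finset V} {L : ℕ}

lemma le_length_add_two_of_isPath
    (hmin : ∀ (u : V) (c : G.Walk u u), c.IsCycle → 2 ≤ #(S ∩ c.support.toFinset) → L ≤ c.length)
    {a b x s : V} {P : G.Walk a b} (hP : P.IsPath) (hab : a ≠ b) (hx : x ∉ P.support)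
    (hxa : G.Adj x a) (hbx : G.Adj b x) (hxS : x ∈ S) (hsS : s ∈ S) (hsP : s ∈ P.support) :
    L ≤ P.length + 2 := by
  have hxs : x ≠ s := fun h => hx (h ▸ hsP)
  have hfeas : 2 ≤ #(S ∩ (Walk.cons hxa (P.concat hbx)).support.toFinset) := by
    rw [← card_pair hxs]
    refine card_le_card fun u hu => ?_
    rcases mem_insert.1 hu with rfl | hu
    · simp [hxS]
    · rw [mem_singleton.1 hu]; simp [hsS, hsP]
  simpa using hmin x _ (hP.isCycle_cons_concat hab hx hxa hbx) hfeas

lemma le_val_sub_add_two {n : ℕ} [NeZero n] {f : ZMod n → V} (hf : ∀ i, G.Adj (f i) (f (i + 1)))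
    (hinj : Function.Injective f)
    (hmin : ∀ (u : V) (c : G.Walk u u), c.IsCycle → 2 ≤ #(S ∩ c.support.toFinset) → L ≤ c.length)
    {x : V} (hxS : x ∈ S) (hxf : x ∉ Set.range f) {a a' t : ZMod n} (hne : a ≠ a')
    (ha : G.Adj x (f a)) (ha' : G.Adj x (f a')) (ht : f t ∈ S) (hta : (t - a).val ≤ (a' - a).val) :
    L ≤ (a' - a).val + 2 := by
  simpa using le_length_add_two_of_isPath hmin (isPath_cyclicArcTo hf hinj a a') (hinj.ne hne)
    (fun h => hxf (mem_range_of_mem_support_cyclicArcTo hf h)) ha ha'.symm hxS ht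
    (mem_support_cyclicArcTo hf hta)

lemma le_val_sub_add_three {n : ℕ} [NeZero n] {f : ZMod n → V}
    (hf : ∀ i, G.Adj (f i) (f (i + 1))) (hinj : Function.Injective f)
    (hmin : ∀ (u : V) (c : G.Walk u u), c.IsCycle → 2 ≤ #(S ∩ c.support.toFinset) → L ≤ c.length)
    {x y : V} (hxS : x ∈ S) (hxf : x ∉ Set.range f) (hyf : y ∉ Set.range f) (hxy : G.Adj x y)
    {a b : ZMod n} (ha : G.Adj x (f a)) (hb : G.Adj y (f b)) (hbS : f b ∈ S) :
    L ≤ (b - a).val + 3 ∧ L ≤ (a - b).val + 3 := by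
  have hnot {i j : ZMod n} {w : V} (hw : w ∉ Set.range f) : w ∉ (cyclicArcTo hf i j).support :=
    fun h => hw (mem_range_of_mem_support_cyclicArcTo hf h)
  have hya : f a ≠ y := fun h => hyf ⟨a, h⟩
  have hxy' : x ≠ y := G.ne_of_adj hxy
  constructor
  · have := le_length_add_two_of_isPath hmin
      ((isPath_cyclicArcTo hf hinj a b).concat (hnot hyf) hb.symm) hya
      (by simpa [hxy'] using hnot hxf) ha hxy.symm hxS hbS
      (Walk.support_concat _ _ ▸ List.mem_append_left _ (mem_support_cyclicArcTo hf le_rfl))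
    simp only [Walk.length_concat, length_cyclicArcTo] at this
    omega
  · have := le_length_add_two_of_isPath hmin
      ((isPath_cyclicArcTo hf hinj b a).cons (hnot hyf) (h := hb)) hya.symm
      (by simpa [hxy'] using hnot hxf) hxy ha.symm hxS hbS
      (List.mem_cons_of_mem _ (mem_support_cyclicArcTo hf (by simp)))
    simp only [Walk.length_cons, length_cyclicArcTo] at this
    omega

end SimpleGraph

open SimpleGraph in
theorem edges_adjacent_pair_to_minimal_cycle_general {V : Type*} [DecidableEq V]
    (G : SimpleGraph V) [DecidableRel G.Adj]
    (X Y S : Finset V)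
    (hdisj : Disjoint X Y)
    (hbip : ∀ u v : V, G.Adj u v → (u ∈ X ∧ v ∈ Y) ∨ (u ∈ Y ∧ v ∈ X))
    (hSX : S ⊆ X)
    (v : V) (c : G.Walk v v) (hc : c.IsCycle)
    (hlen : 6 ≤ c.length)
    (hfeas : 2 ≤ (S ∩ c.support.toFinset).card)
    (hmin : ∀ (u : V) (c' : G.Walk u u), c'.IsCycle →
      2 ≤ (S ∩ c'.support.toFinset).card → c.length ≤ c'.length)
    (x y : V) (hx : x ∈ S) (hxc : x ∉ c.support)
    (hy : y ∈ Y) (hyc : y ∉ c.support)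
    (hxy : G.Adj x y) :
    (c.support.toFinset.filter (fun u => G.Adj x u)).card +
      (c.support.toFinset.filter (fun u => G.Adj y u)).card ≤ c.length / 2 := by
  have : NeZero c.length := ⟨by omega⟩
  set f : ZMod c.length → V := fun i => c.getVert i.val
  have hf : ∀ i, G.Adj (f i) (f (i + 1)) := c.adj_getVert_val_add_one
  have hinj : Function.Injective f := hc.injective_getVert_val
  have hxf : x ∉ Set.range f := fun ⟨i, h⟩ => hxc (h ▸ c.getVert_mem_support _)
  have hyf : y ∉ Set.range f := fun ⟨i, h⟩ => hyc (h ▸ c.getVert_mem_support _)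
  have hside {u w : V} (h : G.Adj u w) : u ∈ X ↔ w ∉ X := mem_iff_notMem_of_adj hdisj hbip h
  rw [hc.card_filter_support_toFinset, hc.card_filter_support_toFinset]
  rw [inter_comm, ← filter_mem_eq_inter, hc.card_filter_support_toFinset] at hfeas
  refine ZMod.card_add_card_le_div_two (P := fun i => f i ∈ X) hlen (fun i => ?_)
    (fun a ha => (hside (mem_filter.1 ha).2).1 (hSX hx))
    (fun b hb => by_contra fun hbX =>
      Finset.disjoint_left.1 hdisj ((hside (mem_filter.1 hb).2).2 hbX) hy)
    (fun t ht => hSX (mem_filter.1 ht).2) hfeas ?_ ?_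
  · have := hside (hf i)
    tauto
  · intro a ha a' ha' hne t ht hta
    exact le_val_sub_add_two hf hinj hmin hx hxf hne (mem_filter.1 ha).2 (mem_filter.1 ha').2
      (mem_filter.1 ht).2 hta
  · intro a ha b hb
    exact le_val_sub_add_three hf hinj hmin hx hxf hyf hxy (mem_filter.1 ha).2
      (mem_filter.1 (mem_inter.1 hb).2).2 (mem_filter.1 (mem_inter.1 hb).1).2

/-- Lemma 1(4): for a minimal feasible cycle C of length ≥ 6 and adjacent
vertices x ∈ S, y ∈ Y off C, e({x,y}, C) ≤ |C|/2. -/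
theorem edges_adjacent_pair_to_minimal_cycle {V : Type*} [Fintype V] [DecidableEq V]
    (G : SimpleGraph V) [DecidableRel G.Adj]
    (X Y S : Finset V)
    (hdisj : Disjoint X Y) (hcover : X ∪ Y = Finset.univ)
    (hbip : ∀ u v : V, G.Adj u v → (u ∈ X ∧ v ∈ Y) ∨ (u ∈ Y ∧ v ∈ X))
    (hSX : S ⊆ X)
    (v : V) (c : G.Walk v v) (hc : c.IsCycle)
    (hlen : 6 ≤ c.length)
    (hfeas : 2 ≤ (S ∩ c.support.toFinset).card)
    (hmin : ∀ (u : V) (c' : G.Walk u u), c'.IsCycle →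
      2 ≤ (S ∩ c'.support.toFinset).card → c.length ≤ c'.length)
    (x y : V) (hx : x ∈ S) (hxc : x ∉ c.support)
    (hy : y ∈ Y) (hyc : y ∉ c.support)
    (hxy : G.Adj x y) :
    (c.support.toFinset.filter (fun u => G.Adj x u)).card +
      (c.support.toFinset.filter (fun u => G.Adj y u)).card ≤ c.length / 2 :=
  edges_adjacent_pair_to_minimal_cycle_general G X Y S hdisj hbip hSX v c hc hlen hfeas hmin x y hx
    hxc hy hyc hxy
end

section
/- Let C be a 4-cycle in a bipartite graph G and let H be a subgraph of G − C consisting of one vertex from each side of the bipartition (|X ∩ V(H)| = |Y ∩ V(H)| = 1). If the number of edges between V(H) and V(C) is at least |V(H)| + 1 = 3, then the induced subgraph on V(C) ∪ V(H) contains a 4-cycle C' and an edge disjoint from C'. -/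
open SimpleGraph


private lemma build_quad {V : Type*} [DecidableEq V] (G : SimpleGraph V) (S : Finset V)
    (x y z w p q : V)
    (hxy : G.Adj x y) (hyz : G.Adj y z) (hzw : G.Adj z w) (hwx : G.Adj w x)
    (hpq : G.Adj p q)
    (hxz : x ≠ z) (hyw : y ≠ w)
    (hxS : x ∈ S) (hyS : y ∈ S) (hzS : z ∈ S) (hwS : w ∈ S)
    (hpS : p ∈ S) (hqS : q ∈ S)
    (hpx : p ≠ x) (hpy : p ≠ y) (hpz : p ≠ z) (hpw : p ≠ w)
    (hqx : q ≠ x) (hqy : q ≠ y) (hqz : q ≠ z) (hqw : q ≠ w) :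
    ∃ (u : V) (c' : G.Walk u u), c'.IsCycle ∧ c'.length = 4 ∧
      c'.support.toFinset ⊆ S ∧
      ∃ p q : V, G.Adj p q ∧ p ∈ S ∧ q ∈ S ∧ p ∉ c'.support ∧ q ∉ c'.support := by
  have n1 := hxy.ne; have n1' := hxy.ne'
  have n2 := hyz.ne; have n2' := hyz.ne'
  have n3 := hzw.ne; have n3' := hzw.ne'
  have n4 := hwx.ne; have n4' := hwx.ne'
  have hzx := hxz.symm; have hwy := hyw.symm
  refine ⟨x, Walk.cons hxy (Walk.cons hyz (Walk.cons hzw (Walk.cons hwx Walk.nil))),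
    ?_, rfl, ?_, p, q, hpq, hpS, hqS, ?_, ?_⟩
  · constructor
    · constructor
      · simp [Walk.isTrail_def, Sym2.eq_iff]
        tauto
      · simp
    · simp [Walk.support_cons]
      tauto
  · intro t ht
    simp at ht
    rcases ht with h|h|h|h <;> subst h <;> assumption
  · simp [Walk.support_cons]; tauto
  · simp [Walk.support_cons]; tauto

set_option maxHeartbeats 1600000 in
/-- Lemma 2(1): a quadrilateral C and two off-cycle vertices a ∈ X, b ∈ Y with
e({a,b}, C) ≥ 3 yield, inside V(C) ∪ {a,b}, a quadrilateral C' together with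
an edge disjoint from C'. -/
theorem quad_plus_two_vertices {V : Type*} [Fintype V] [DecidableEq V]
    (G : SimpleGraph V) [DecidableRel G.Adj]
    (X Y : Finset V)
    (hdisj : Disjoint X Y) (hcover : X ∪ Y = Finset.univ)
    (hbip : ∀ u v : V, G.Adj u v → (u ∈ X ∧ v ∈ Y) ∨ (u ∈ Y ∧ v ∈ X))
    (v : V) (c : G.Walk v v) (hc : c.IsCycle) (hlen : c.length = 4)
    (a b : V) (ha : a ∈ X) (hb : b ∈ Y)
    (hac : a ∉ c.support) (hbc : b ∉ c.support)
    (he : 3 ≤ (c.support.toFinset.filter (fun u => G.Adj a u)).card +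
        (c.support.toFinset.filter (fun u => G.Adj b u)).card) :
    ∃ (u : V) (c' : G.Walk u u), c'.IsCycle ∧ c'.length = 4 ∧
      c'.support.toFinset ⊆ insert a (insert b c.support.toFinset) ∧
      ∃ p q : V, G.Adj p q ∧
        p ∈ insert a (insert b c.support.toFinset) ∧
        q ∈ insert a (insert b c.support.toFinset) ∧
        p ∉ c'.support ∧ q ∉ c'.support := by
  have hXY : ∀ u t : V, u ∈ X → t ∈ X → ¬ G.Adj u t := by
    intro u t hu ht h
    rcases hbip u t h with ⟨_, h2⟩ | ⟨h2, _⟩ <;>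
      exact Finset.disjoint_left.mp hdisj (by assumption) h2
  have hYY : ∀ u t : V, u ∈ Y → t ∈ Y → ¬ G.Adj u t := by
    intro u t hu ht h
    rcases hbip u t h with ⟨h2, _⟩ | ⟨_, h2⟩ <;>
      exact Finset.disjoint_left.mp hdisj h2 (by assumption)
  have hab : a ≠ b := fun h => Finset.disjoint_left.mp hdisj ha (h ▸ hb)
  cases c with
  | nil => simp at hlen
  | cons h1 c =>
  cases c with
  | nil => simp at hlen
  | cons h2 c =>
  cases c with
  | nil => simp at hlen
  | cons h3 c =>
  cases c with
  | nil => simp at hlen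
  | cons h4 c =>
  cases c with
  | cons h5 c => simp at hlen
  | nil =>
  rename_i w1 w2 w3
  have hnd := hc.2
  simp [List.nodup_cons] at hnd
  obtain ⟨⟨h12, h13, h1v⟩, ⟨h23, h2v⟩, h3v⟩ := hnd
  simp [Walk.support_cons] at hac hbc
  push_neg at hac hbc
  obtain ⟨hav, ha1, ha2, ha3, -⟩ := hac
  obtain ⟨hbv, hb1, hb2, hb3, -⟩ := hbc
  have hT : (Walk.cons h1 (Walk.cons h2 (Walk.cons h3 (Walk.cons h4
      Walk.nil)))).support.toFinset = ({v, w1, w2, w3} : Finset V) := by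
    ext u; simp [Walk.support_cons]; tauto
  rw [hT] at he
  have hvmem : v ∈ insert a (insert b (Walk.cons h1 (Walk.cons h2 (Walk.cons h3
      (Walk.cons h4 Walk.nil)))).support.toFinset) := by simp
  rcases hbip v w1 h1 with ⟨hvX, hw1Y⟩ | ⟨hvY, hw1X⟩
  · -- v, w2 ∈ X ; w1, w3 ∈ Y
    have hw2X : w2 ∈ X := by
      rcases hbip w1 w2 h2 with ⟨h', _⟩ | ⟨_, h'⟩
      · exact absurd hw1Y (Finset.disjoint_left.mp hdisj h')
      · exact h'
    have hw3Y : w3 ∈ Y := by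
      rcases hbip w3 v h4 with ⟨_, h'⟩ | ⟨h', _⟩
      · exact absurd h' (Finset.disjoint_left.mp hdisj hvX)
      · exact h'
    have hnav : ¬ G.Adj a v := hXY a v ha hvX
    have hnaw2 : ¬ G.Adj a w2 := hXY a w2 ha hw2X
    have hnbw1 : ¬ G.Adj b w1 := hYY b w1 hb hw1Y
    have hnbw3 : ¬ G.Adj b w3 := hYY b w3 hb hw3Y
    have hcA : (({v, w1, w2, w3} : Finset V).filter (fun u => G.Adj a u)).card =
        (if G.Adj a w1 then 1 else 0) + (if G.Adj a w3 then 1 else 0) := by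
      by_cases hA1 : G.Adj a w1 <;> by_cases hA3 : G.Adj a w3 <;>
        simp [Finset.filter_insert, Finset.filter_singleton, hnav, hnaw2, hA1, hA3,
          Finset.card_insert_of_notMem, h13]
    have hcB : (({v, w1, w2, w3} : Finset V).filter (fun u => G.Adj b u)).card =
        (if G.Adj b v then 1 else 0) + (if G.Adj b w2 then 1 else 0) := by
      by_cases hB0 : G.Adj b v <;> by_cases hB2 : G.Adj b w2 <;>
        simp [Finset.filter_insert, Finset.filter_singleton, hnbw1, hnbw3, hB0, hB2,
          Finset.card_insert_of_notMem, h2v, Ne.symm h2v]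
    rw [hcA, hcB] at he
    by_cases hA1 : G.Adj a w1 <;> by_cases hA3 : G.Adj a w3 <;>
      by_cases hB0 : G.Adj b v <;> by_cases hB2 : G.Adj b w2 <;>
      simp [hA1, hA3, hB0, hB2] at he
    -- remaining cases: (A1∧A3∧B0∧B2), (A1∧A3∧B0), (A1∧A3∧B2), (A1∧B0∧B2), (A3∧B0∧B2)
    · -- TTTT : cycle a w1 w2 w3, edge b v
      exact build_quad G _ a w1 w2 w3 b v hA1 h2 h3 hA3.symm hB0 ha2 h13
        (by simp) (by simp) (by simp) (by simp) (by simp) (by simp)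
        (Ne.symm hab) hb1 hb2 hb3 (Ne.symm hav) (Ne.symm h1v) (Ne.symm h2v) (Ne.symm h3v)
    · -- TTTF : cycle a w1 w2 w3, edge b v
      exact build_quad G _ a w1 w2 w3 b v hA1 h2 h3 hA3.symm hB0 ha2 h13
        (by simp) (by simp) (by simp) (by simp) (by simp) (by simp)
        (Ne.symm hab) hb1 hb2 hb3 (Ne.symm hav) (Ne.symm h1v) (Ne.symm h2v) (Ne.symm h3v)
    · -- TTFT : cycle a w1 v w3, edge b w2
      exact build_quad G _ a w1 v w3 b w2 hA1 h1.symm h4.symm hA3.symm hB2 hav h13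
        (by simp) (by simp) (by simp) (by simp) (by simp) (by simp)
        (Ne.symm hab) hb1 hbv hb3 (Ne.symm ha2) (Ne.symm h12) h2v h23
    · -- TFTT : cycle b v w3 w2, edge a w1
      exact build_quad G _ b v w3 w2 a w1 hB0 h4.symm h3.symm hB2.symm hA1 hb3 (Ne.symm h2v)
        (by simp) (by simp) (by simp) (by simp) (by simp) (by simp)
        hab hav ha3 ha2 (Ne.symm hb1) h1v h13 h12
    · -- FTTT : cycle b v w1 w2, edge a w3
      exact build_quad G _ b v w1 w2 a w3 hB0 h1 h2 hB2.symm hA3 hb1 (Ne.symm h2v)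
        (by simp) (by simp) (by simp) (by simp) (by simp) (by simp)
        hab hav ha1 ha2 (Ne.symm hb3) h3v (Ne.symm h13) (Ne.symm h23)
  · -- v, w2 ∈ Y ; w1, w3 ∈ X
    have hw2Y : w2 ∈ Y := by
      rcases hbip w1 w2 h2 with ⟨_, h'⟩ | ⟨h', _⟩
      · exact h'
      · exact absurd hw1X (Finset.disjoint_left.mp hdisj · h')
    have hw3X : w3 ∈ X := by
      rcases hbip w3 v h4 with ⟨h', _⟩ | ⟨_, h'⟩
      · exact h'
      · exact absurd h' (fun hh => Finset.disjoint_left.mp hdisj hh hvY)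
    have hnbv : ¬ G.Adj b v := hYY b v hb hvY
    have hnbw2 : ¬ G.Adj b w2 := hYY b w2 hb hw2Y
    have hnaw1 : ¬ G.Adj a w1 := hXY a w1 ha hw1X
    have hnaw3 : ¬ G.Adj a w3 := hXY a w3 ha hw3X
    have hcA : (({v, w1, w2, w3} : Finset V).filter (fun u => G.Adj a u)).card =
        (if G.Adj a v then 1 else 0) + (if G.Adj a w2 then 1 else 0) := by
      by_cases hA0 : G.Adj a v <;> by_cases hA2 : G.Adj a w2 <;>
        simp [Finset.filter_insert, Finset.filter_singleton, hnaw1, hnaw3, hA0, hA2,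
          Finset.card_insert_of_notMem, h2v, Ne.symm h2v]
    have hcB : (({v, w1, w2, w3} : Finset V).filter (fun u => G.Adj b u)).card =
        (if G.Adj b w1 then 1 else 0) + (if G.Adj b w3 then 1 else 0) := by
      by_cases hB1 : G.Adj b w1 <;> by_cases hB3 : G.Adj b w3 <;>
        simp [Finset.filter_insert, Finset.filter_singleton, hnbv, hnbw2, hB1, hB3,
          Finset.card_insert_of_notMem, h13]
    rw [hcA, hcB] at he
    by_cases hA0 : G.Adj a v <;> by_cases hA2 : G.Adj a w2 <;>
      by_cases hB1 : G.Adj b w1 <;> by_cases hB3 : G.Adj b w3 <;>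
      simp [hA0, hA2, hB1, hB3] at he
    · -- TTTT : cycle a v w3 w2, edge b w1
      exact build_quad G _ a v w3 w2 b w1 hA0 h4.symm h3.symm hA2.symm hB1 ha3 (Ne.symm h2v)
        (by simp) (by simp) (by simp) (by simp) (by simp) (by simp)
        (Ne.symm hab) hbv hb3 hb2 (Ne.symm ha1) h1v h13 h12
    · -- TTTF : cycle a v w3 w2, edge b w1
      exact build_quad G _ a v w3 w2 b w1 hA0 h4.symm h3.symm hA2.symm hB1 ha3 (Ne.symm h2v)
        (by simp) (by simp) (by simp) (by simp) (by simp) (by simp)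
        (Ne.symm hab) hbv hb3 hb2 (Ne.symm ha1) h1v h13 h12
    · -- TTFT : cycle a v w1 w2, edge b w3
      exact build_quad G _ a v w1 w2 b w3 hA0 h1 h2 hA2.symm hB3 ha1 (Ne.symm h2v)
        (by simp) (by simp) (by simp) (by simp) (by simp) (by simp)
        (Ne.symm hab) hbv hb1 hb2 (Ne.symm ha3) h3v (Ne.symm h13) (Ne.symm h23)
    · -- TFTT : cycle b w1 w2 w3, edge a v
      exact build_quad G _ b w1 w2 w3 a v hB1 h2 h3 hB3.symm hA0 hb2 h13
        (by simp) (by simp) (by simp) (by simp) (by simp) (by simp)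
        hab ha1 ha2 ha3 (Ne.symm hbv) (Ne.symm h1v) (Ne.symm h2v) (Ne.symm h3v)
    · -- FTTT : cycle b w1 v w3, edge a w2
      exact build_quad G _ b w1 v w3 a w2 hB1 h1.symm h4.symm hB3.symm hA2 hbv h13
        (by simp) (by simp) (by simp) (by simp) (by simp) (by simp)
        hab ha1 hav ha3 (Ne.symm hb2) (Ne.symm h12) h2v h23
end

section
/- Let C be a 4-cycle in a bipartite graph G and let H be a 4-vertex subgraph of G − C containing two disjoint edges. If the number of edges between V(H) and V(C) is at least 5, then the induced subgraph on V(C) ∪ V(H) contains a 4-cycle C' and a path P' on 4 vertices with P' vertex-disjoint from C'. -/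
set_option maxHeartbeats 1600000
open SimpleGraph

lemma nodup_of_card4 {V : Type*} [DecidableEq V] {w x y z : V}
    (hcard : ({w,x,y,z} : Finset V).card = 4) :
    ([w,x,y,z] : List V).Nodup := by
  have h1' : ([w,x,y,z] : List V).toFinset = {w,x,y,z} := by simp
  have h2' := List.card_toFinset (l := ([w,x,y,z] : List V))
  rw [h1', hcard] at h2'
  have hlen3 : ([w,x,y,z] : List V).dedup.length = ([w,x,y,z] : List V).length := by
    rw [← h2']; rfl
  exact List.dedup_eq_self.mp ((List.dedup_sublist _).eq_of_length hlen3)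

lemma cycle_struct {V : Type*} [DecidableEq V] (G : SimpleGraph V)
    (v : V) (c : G.Walk v v) (hc : c.IsCycle) (hlen : c.length = 4) :
    ∃ (s₁ s₂ s₃ : V), G.Adj v s₁ ∧ G.Adj s₁ s₂ ∧ G.Adj s₂ s₃ ∧ G.Adj s₃ v ∧
      c.support.toFinset = {v, s₁, s₂, s₃} ∧
      s₁ ≠ v ∧ s₂ ≠ v ∧ s₃ ≠ v ∧ s₁ ≠ s₂ ∧ s₁ ≠ s₃ ∧ s₂ ≠ s₃ := by
  cases c with
  | nil => simp at hlen
  | cons h1 c =>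
  cases c with
  | nil => simp at hlen
  | cons h2 c =>
  cases c with
  | nil => simp at hlen
  | cons h3 c =>
  cases c with
  | nil => simp at hlen
  | cons h4 c =>
  cases c with
  | cons h5 c => simp [SimpleGraph.Walk.length_cons] at hlen
  | nil =>
    rename_i s₁ s₂ s₃
    have hnd := hc.support_nodup
    simp [List.nodup_cons] at hnd
    refine ⟨s₁, s₂, s₃, h1, h2, h3, h4, ?_, ?_, ?_, ?_, ?_, ?_, ?_⟩ <;>
      first
        | (ext a; simp [SimpleGraph.Walk.support_cons]; tauto)
        | tauto
open SimpleGraph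

lemma nodup_of_card8 {V : Type*} [DecidableEq V] {w x y z p q r s : V}
    (hcard : ({w,x,y,z,p,q,r,s} : Finset V).card = 8) :
    ([w,x,y,z,p,q,r,s] : List V).Nodup := by
  have h1' : ([w,x,y,z,p,q,r,s] : List V).toFinset = {w,x,y,z,p,q,r,s} := by simp
  have h2' := List.card_toFinset (l := ([w,x,y,z,p,q,r,s] : List V))
  rw [h1', hcard] at h2'
  have hlen3 : ([w,x,y,z,p,q,r,s] : List V).dedup.length = ([w,x,y,z,p,q,r,s] : List V).length := by
    rw [← h2']; rfl
  exact List.dedup_eq_self.mp ((List.dedup_sublist _).eq_of_length hlen3)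

lemma isCycle4 {V : Type*} (G : SimpleGraph V) {p q r s : V}
    (h1 : G.Adj p q) (h2 : G.Adj q r) (h3 : G.Adj r s) (h4 : G.Adj s p)
    (hpr : p ≠ r) (hqs : q ≠ s) :
    (Walk.cons h1 (Walk.cons h2 (Walk.cons h3 (Walk.cons h4 Walk.nil)))).IsCycle := by
  simp [Walk.isCycle_def, Walk.isTrail_def, List.Nodup, Sym2.eq, Sym2.rel_iff']
  aesop

lemma isPath4 {V : Type*} (G : SimpleGraph V) {p q r s : V}
    (h1 : G.Adj p q) (h2 : G.Adj q r) (h3 : G.Adj r s)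
    (hpr : p ≠ r) (hps : p ≠ s) (hqs : q ≠ s) :
    (Walk.cons h1 (Walk.cons h2 (Walk.cons h3 Walk.nil))).IsPath := by
  simp [Walk.isPath_def]
  aesop

lemma build {V : Type*} [DecidableEq V] (G : SimpleGraph V) (S : Finset V)
    {w x y z p q r s : V}
    (h1 : G.Adj w x) (h2 : G.Adj x y) (h3 : G.Adj y z) (h4 : G.Adj z w)
    (g1 : G.Adj p q) (g2 : G.Adj q r) (g3 : G.Adj r s)
    (hcard : ({w,x,y,z,p,q,r,s} : Finset V).card = 8)
    (hmem : w ∈ S ∧ x ∈ S ∧ y ∈ S ∧ z ∈ S ∧ p ∈ S ∧ q ∈ S ∧ r ∈ S ∧ s ∈ S) :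
    ∃ (u : V) (c' : G.Walk u u) (p' q' : V) (P : G.Walk p' q'),
      c'.IsCycle ∧ c'.length = 4 ∧ c'.support.toFinset ⊆ S ∧
      P.IsPath ∧ P.support.length = 4 ∧ P.support.toFinset ⊆ S ∧
      List.Disjoint P.support c'.support := by
  have hnd := nodup_of_card8 hcard
  simp only [List.nodup_cons, List.mem_cons, List.not_mem_nil, or_false,
    List.mem_singleton, List.nodup_nil, and_true, not_or] at hnd
  obtain ⟨hw, hx, hy, hz, hp, hq, hr, -⟩ := hnd
  clear hcard
  refine ⟨w, Walk.cons h1 (Walk.cons h2 (Walk.cons h3 (Walk.cons h4 Walk.nil))),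
    p, s, Walk.cons g1 (Walk.cons g2 (Walk.cons g3 Walk.nil)),
    isCycle4 G h1 h2 h3 h4 (by tauto) (by tauto), rfl, ?_,
    isPath4 G g1 g2 g3 (by tauto) (by tauto) (by tauto), rfl, ?_, ?_⟩ <;>
  · simp [Walk.support, List.Disjoint, Finset.insert_subset_iff]
    tauto

lemma key {V : Type*} [DecidableEq V] (G : SimpleGraph V) (S : Finset V)
    {p₁ p₂ q₁ q₂ a₁ b₁ a₂ b₂ c : V}
    (hcard : ({p₁,p₂,q₁,q₂,a₁,b₁,a₂,b₂} : Finset V).card = 8)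
    (hmem : p₁ ∈ S ∧ p₂ ∈ S ∧ q₁ ∈ S ∧ q₂ ∈ S ∧ a₁ ∈ S ∧ b₁ ∈ S ∧ a₂ ∈ S ∧ b₂ ∈ S)
    (h11 : G.Adj p₁ q₁) (h12 : G.Adj p₁ q₂) (h21 : G.Adj p₂ q₁) (h22 : G.Adj p₂ q₂)
    (hab1 : G.Adj a₁ b₁) (hab2 : G.Adj a₂ b₂)
    (ha1 : G.Adj a₁ q₁) (ha2 : G.Adj a₁ q₂) (hb1 : G.Adj b₁ p₁)
    (hcp : c = p₁ ∨ c = p₂ ∨ c = q₁ ∨ c = q₂) (hxc : G.Adj a₂ c) :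
    ∃ (u : V) (c' : G.Walk u u) (p' q' : V) (P : G.Walk p' q'),
      c'.IsCycle ∧ c'.length = 4 ∧ c'.support.toFinset ⊆ S ∧
      P.IsPath ∧ P.support.length = 4 ∧ P.support.toFinset ⊆ S ∧
      List.Disjoint P.support c'.support := by
  obtain ⟨s1,s2,s3,s4,s5,s6,s7,s8⟩ := hmem
  rcases hcp with rfl | rfl | rfl | rfl
  · have e : ({c,p₂,q₁,q₂,a₁,b₁,a₂,b₂} : Finset V)
        = {a₁,q₁,p₂,q₂,b₂,a₂,c,b₁} := by clear hcard; ext a; simp only [Finset.mem_insert, Finset.mem_singleton]; constructor <;> rintro (rfl|rfl|rfl|rfl|rfl|rfl|rfl|rfl) <;> simp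
    exact build G S ha1 h21.symm h22 ha2.symm hab2.symm hxc hb1.symm (by rw [e] at hcard; exact hcard)
      ⟨s5,s3,s2,s4,s8,s7,s1,s6⟩
  · have e : ({p₁,c,q₁,q₂,a₁,b₁,a₂,b₂} : Finset V)
        = {a₁,b₁,p₁,q₁,b₂,a₂,c,q₂} := by clear hcard; ext a; simp only [Finset.mem_insert, Finset.mem_singleton]; constructor <;> rintro (rfl|rfl|rfl|rfl|rfl|rfl|rfl|rfl) <;> simp
    exact build G S hab1 hb1 h11 ha1.symm hab2.symm hxc h22 (by rw [e] at hcard; exact hcard)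
      ⟨s5,s6,s1,s3,s8,s7,s2,s4⟩
  · have e : ({p₁,p₂,c,q₂,a₁,b₁,a₂,b₂} : Finset V)
        = {a₁,b₁,p₁,q₂,b₂,a₂,c,p₂} := by clear hcard; ext a; simp only [Finset.mem_insert, Finset.mem_singleton]; constructor <;> rintro (rfl|rfl|rfl|rfl|rfl|rfl|rfl|rfl) <;> simp
    exact build G S hab1 hb1 h12 ha2.symm hab2.symm hxc h21.symm (by rw [e] at hcard; exact hcard)
      ⟨s5,s6,s1,s4,s8,s7,s3,s2⟩
  · have e : ({p₁,p₂,q₁,c,a₁,b₁,a₂,b₂} : Finset V)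
        = {a₁,b₁,p₁,q₁,b₂,a₂,c,p₂} := by clear hcard; ext a; simp only [Finset.mem_insert, Finset.mem_singleton]; constructor <;> rintro (rfl|rfl|rfl|rfl|rfl|rfl|rfl|rfl) <;> simp
    exact build G S hab1 hb1 h11 ha1.symm hab2.symm hxc h22.symm (by rw [e] at hcard; exact hcard)
      ⟨s5,s6,s1,s3,s8,s7,s4,s2⟩

lemma key2 {V : Type*} [DecidableEq V] (G : SimpleGraph V) (S : Finset V)
    {p₁ p₂ q₁ q₂ a₁ b₁ a₂ b₂ c₀ c : V}
    (hcard : ({p₁,p₂,q₁,q₂,a₁,b₁,a₂,b₂} : Finset V).card = 8)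
    (hmem : p₁ ∈ S ∧ p₂ ∈ S ∧ q₁ ∈ S ∧ q₂ ∈ S ∧ a₁ ∈ S ∧ b₁ ∈ S ∧ a₂ ∈ S ∧ b₂ ∈ S)
    (h11 : G.Adj p₁ q₁) (h12 : G.Adj p₁ q₂) (h21 : G.Adj p₂ q₁) (h22 : G.Adj p₂ q₂)
    (hab1 : G.Adj a₁ b₁) (hab2 : G.Adj a₂ b₂)
    (ha1 : G.Adj a₁ q₁) (ha2 : G.Adj a₁ q₂)
    (hb0 : c₀ = p₁ ∨ c₀ = p₂) (hb1 : G.Adj b₁ c₀)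
    (hcp : c = p₁ ∨ c = p₂ ∨ c = q₁ ∨ c = q₂) (hxc : G.Adj a₂ c ∨ G.Adj b₂ c) :
    ∃ (u : V) (c' : G.Walk u u) (p' q' : V) (P : G.Walk p' q'),
      c'.IsCycle ∧ c'.length = 4 ∧ c'.support.toFinset ⊆ S ∧
      P.IsPath ∧ P.support.length = 4 ∧ P.support.toFinset ⊆ S ∧
      List.Disjoint P.support c'.support := by
  obtain ⟨s1,s2,s3,s4,s5,s6,s7,s8⟩ := hmem
  rcases hb0 with rfl | rfl
  · rcases hxc with hxc | hxc
    · exact key G S hcard ⟨s1,s2,s3,s4,s5,s6,s7,s8⟩ h11 h12 h21 h22 hab1 hab2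
        ha1 ha2 hb1 hcp hxc
    · have e : ({c₀,p₂,q₁,q₂,a₁,b₁,a₂,b₂} : Finset V)
          = {c₀,p₂,q₁,q₂,a₁,b₁,b₂,a₂} := by
        clear hcard; ext a; simp only [Finset.mem_insert, Finset.mem_singleton]
        constructor <;> rintro (rfl|rfl|rfl|rfl|rfl|rfl|rfl|rfl) <;> simp
      exact key G S (by rw [e] at hcard; exact hcard) ⟨s1,s2,s3,s4,s5,s6,s8,s7⟩
        h11 h12 h21 h22 hab1 hab2.symm ha1 ha2 hb1 hcp hxc
  · have hcp' : c = c₀ ∨ c = p₁ ∨ c = q₁ ∨ c = q₂ := by clear hcard; tauto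
    rcases hxc with hxc | hxc
    · have e : ({p₁,c₀,q₁,q₂,a₁,b₁,a₂,b₂} : Finset V)
          = {c₀,p₁,q₁,q₂,a₁,b₁,a₂,b₂} := by
        clear hcard; ext a; simp only [Finset.mem_insert, Finset.mem_singleton]
        constructor <;> rintro (rfl|rfl|rfl|rfl|rfl|rfl|rfl|rfl) <;> simp
      exact key G S (by rw [e] at hcard; exact hcard) ⟨s2,s1,s3,s4,s5,s6,s7,s8⟩
        h21 h22 h11 h12 hab1 hab2 ha1 ha2 hb1 hcp' hxc
    · have e : ({p₁,c₀,q₁,q₂,a₁,b₁,a₂,b₂} : Finset V)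
          = {c₀,p₁,q₁,q₂,a₁,b₁,b₂,a₂} := by
        clear hcard; ext a; simp only [Finset.mem_insert, Finset.mem_singleton]
        constructor <;> rintro (rfl|rfl|rfl|rfl|rfl|rfl|rfl|rfl) <;> simp
      exact key G S (by rw [e] at hcard; exact hcard) ⟨s2,s1,s3,s4,s5,s6,s8,s7⟩
        h21 h22 h11 h12 hab1 hab2.symm ha1 ha2 hb1 hcp' hxc

lemma main_aux {V : Type*} [DecidableEq V] (G : SimpleGraph V) [DecidableRel G.Adj]
    (X Y : Finset V) (hdisj : Disjoint X Y)
    (hbip : ∀ u v : V, G.Adj u v → (u ∈ X ∧ v ∈ Y) ∨ (u ∈ Y ∧ v ∈ X))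
    (hXcover : ∀ w : V, w ∈ X ∨ w ∈ Y)
    {p₁ p₂ q₁ q₂ a₁ b₁ a₂ b₂ : V} (S : Finset V)
    (hp1 : p₁ ∈ X) (hp2 : p₂ ∈ X) (hq1 : q₁ ∈ Y) (hq2 : q₂ ∈ Y)
    (hcard : ({p₁,p₂,q₁,q₂,a₁,b₁,a₂,b₂} : Finset V).card = 8)
    (hmem : p₁ ∈ S ∧ p₂ ∈ S ∧ q₁ ∈ S ∧ q₂ ∈ S ∧ a₁ ∈ S ∧ b₁ ∈ S ∧ a₂ ∈ S ∧ b₂ ∈ S)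
    (h11 : G.Adj p₁ q₁) (h12 : G.Adj p₁ q₂) (h21 : G.Adj p₂ q₁) (h22 : G.Adj p₂ q₂)
    (hab1 : G.Adj a₁ b₁) (hab2 : G.Adj a₂ b₂)
    (hd1 : (({p₁,p₂,q₁,q₂} : Finset V).filter (fun u => G.Adj a₁ u)).card = 2)
    (hd2 : ∃ c ∈ ({p₁,p₂,q₁,q₂} : Finset V), G.Adj b₁ c)
    (hd3 : ∃ c ∈ ({p₁,p₂,q₁,q₂} : Finset V), G.Adj a₂ c ∨ G.Adj b₂ c) :
    ∃ (u : V) (c' : G.Walk u u) (p' q' : V) (P : G.Walk p' q'),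
      c'.IsCycle ∧ c'.length = 4 ∧ c'.support.toFinset ⊆ S ∧
      P.IsPath ∧ P.support.length = 4 ∧ P.support.toFinset ⊆ S ∧
      List.Disjoint P.support c'.support := by
  obtain ⟨s1,s2,s3,s4,s5,s6,s7,s8⟩ := hmem
  obtain ⟨c₀, hc₀T, hbc₀⟩ := hd2
  obtain ⟨c₂, hc₂T, hx⟩ := hd3
  have hDXY : ∀ w : V, w ∈ X → w ∈ Y → False := fun w hw hw' =>
    Finset.disjoint_left.mp hdisj hw hw'
  have hnd := nodup_of_card8 hcard
  simp only [List.nodup_cons, List.mem_cons, List.not_mem_nil, or_false,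
    List.mem_singleton, List.nodup_nil, and_true, not_or] at hnd
  obtain ⟨⟨n12,n13,n14,-⟩, ⟨n23,n24,-⟩, ⟨n34,-⟩, -⟩ := hnd
  rcases hXcover a₁ with hA | hA
  · -- a₁ ∈ X : neighbours of a₁ among cycle vertices lie in {q₁, q₂}
    have hsub : (({p₁,p₂,q₁,q₂} : Finset V).filter (fun u => G.Adj a₁ u)) ⊆ {q₁,q₂} := by
      intro u hu
      rw [Finset.mem_filter] at hu
      obtain ⟨huT, hadj⟩ := hu
      have huY : u ∈ Y := by
        rcases hbip _ _ hadj with ⟨-, h⟩ | ⟨h, -⟩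
        · exact h
        · exact absurd h (fun h => hDXY _ hA h)
      simp only [Finset.mem_insert, Finset.mem_singleton] at huT ⊢
      rcases huT with rfl | rfl | rfl | rfl
      · exact absurd huY (fun h => hDXY _ hp1 h)
      · exact absurd huY (fun h => hDXY _ hp2 h)
      · exact Or.inl rfl
      · exact Or.inr rfl
    have hq12 : ({q₁,q₂} : Finset V).card ≤ 2 := by
      apply le_trans (Finset.card_insert_le _ _); simp
    have heq : (({p₁,p₂,q₁,q₂} : Finset V).filter (fun u => G.Adj a₁ u)) = {q₁,q₂} :=
      Finset.eq_of_subset_of_card_le hsub (by rw [hd1]; exact hq12)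
    have ha1 : G.Adj a₁ q₁ := by
      have : q₁ ∈ (({p₁,p₂,q₁,q₂} : Finset V).filter (fun u => G.Adj a₁ u)) := by
        rw [heq]; simp
      exact (Finset.mem_filter.mp this).2
    have ha2 : G.Adj a₁ q₂ := by
      have : q₂ ∈ (({p₁,p₂,q₁,q₂} : Finset V).filter (fun u => G.Adj a₁ u)) := by
        rw [heq]; simp
      exact (Finset.mem_filter.mp this).2
    have hB : b₁ ∈ Y := by
      rcases hbip _ _ hab1 with ⟨-, h⟩ | ⟨h, -⟩
      · exact h
      · exact absurd h (fun h => hDXY _ hA h)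
    have hc₀X : c₀ ∈ X := by
      rcases hbip _ _ hbc₀ with ⟨h, -⟩ | ⟨-, h⟩
      · exact absurd h (fun h => hDXY _ h hB)
      · exact h
    have hb0 : c₀ = p₁ ∨ c₀ = p₂ := by
      simp only [Finset.mem_insert, Finset.mem_singleton] at hc₀T
      rcases hc₀T with rfl | rfl | rfl | rfl
      · exact Or.inl rfl
      · exact Or.inr rfl
      · exact absurd hc₀X (fun h => hDXY _ h hq1)
      · exact absurd hc₀X (fun h => hDXY _ h hq2)
    have hcp : c₂ = p₁ ∨ c₂ = p₂ ∨ c₂ = q₁ ∨ c₂ = q₂ := by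
      simpa only [Finset.mem_insert, Finset.mem_singleton] using hc₂T
    exact key2 G S hcard ⟨s1,s2,s3,s4,s5,s6,s7,s8⟩ h11 h12 h21 h22 hab1 hab2
      ha1 ha2 hb0 hbc₀ hcp hx
  · -- a₁ ∈ Y : swap roles of the p's and q's
    have hsub : (({p₁,p₂,q₁,q₂} : Finset V).filter (fun u => G.Adj a₁ u)) ⊆ {p₁,p₂} := by
      intro u hu
      rw [Finset.mem_filter] at hu
      obtain ⟨huT, hadj⟩ := hu
      have huX : u ∈ X := by
        rcases hbip _ _ hadj with ⟨h, -⟩ | ⟨-, h⟩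
        · exact absurd h (fun h => hDXY _ h hA)
        · exact h
      simp only [Finset.mem_insert, Finset.mem_singleton] at huT ⊢
      rcases huT with rfl | rfl | rfl | rfl
      · exact Or.inl rfl
      · exact Or.inr rfl
      · exact absurd huX (fun h => hDXY _ h hq1)
      · exact absurd huX (fun h => hDXY _ h hq2)
    have hq12 : ({p₁,p₂} : Finset V).card ≤ 2 := by
      apply le_trans (Finset.card_insert_le _ _); simp
    have heq : (({p₁,p₂,q₁,q₂} : Finset V).filter (fun u => G.Adj a₁ u)) = {p₁,p₂} :=
      Finset.eq_of_subset_of_card_le hsub (by rw [hd1]; exact hq12)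
    have ha1 : G.Adj a₁ p₁ := by
      have : p₁ ∈ (({p₁,p₂,q₁,q₂} : Finset V).filter (fun u => G.Adj a₁ u)) := by
        rw [heq]; simp
      exact (Finset.mem_filter.mp this).2
    have ha2 : G.Adj a₁ p₂ := by
      have : p₂ ∈ (({p₁,p₂,q₁,q₂} : Finset V).filter (fun u => G.Adj a₁ u)) := by
        rw [heq]; simp
      exact (Finset.mem_filter.mp this).2
    have hB : b₁ ∈ X := by
      rcases hbip _ _ hab1 with ⟨h, -⟩ | ⟨-, h⟩
      · exact absurd h (fun h => hDXY _ h hA)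
      · exact h
    have hc₀Y : c₀ ∈ Y := by
      rcases hbip _ _ hbc₀ with ⟨-, h⟩ | ⟨h, -⟩
      · exact h
      · exact absurd h (fun h => hDXY _ hB h)
    have hb0 : c₀ = q₁ ∨ c₀ = q₂ := by
      simp only [Finset.mem_insert, Finset.mem_singleton] at hc₀T
      rcases hc₀T with rfl | rfl | rfl | rfl
      · exact absurd hc₀Y (fun h => hDXY _ hp1 h)
      · exact absurd hc₀Y (fun h => hDXY _ hp2 h)
      · exact Or.inl rfl
      · exact Or.inr rfl
    have hcp : c₂ = q₁ ∨ c₂ = q₂ ∨ c₂ = p₁ ∨ c₂ = p₂ := by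
      have := hc₂T
      simp only [Finset.mem_insert, Finset.mem_singleton] at this
      clear hcard; tauto
    have e : ({p₁,p₂,q₁,q₂,a₁,b₁,a₂,b₂} : Finset V)
        = {q₁,q₂,p₁,p₂,a₁,b₁,a₂,b₂} := by
      clear hcard; ext a; simp only [Finset.mem_insert, Finset.mem_singleton]
      constructor <;> rintro (rfl|rfl|rfl|rfl|rfl|rfl|rfl|rfl) <;> simp
    exact key2 G S (by rw [e] at hcard; exact hcard) ⟨s3,s4,s1,s2,s5,s6,s7,s8⟩
      h11.symm h21.symm h12.symm h22.symm hab1 hab2 ha1 ha2 hb0 hbc₀ hcp hx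



/-- Lemma 2(2): a quadrilateral C and a 4-vertex subgraph H (disjoint from C)
containing two disjoint edges, with e(H, C) ≥ 5, yield inside V(C) ∪ V(H) a
quadrilateral C' and a path P' on 4 vertices disjoint from C'. -/
theorem quad_plus_two_edges {V : Type*} [Fintype V] [DecidableEq V]
    (G : SimpleGraph V) [DecidableRel G.Adj]
    (X Y : Finset V)
    (hdisj : Disjoint X Y) (hcover : X ∪ Y = Finset.univ)
    (hbip : ∀ u v : V, G.Adj u v → (u ∈ X ∧ v ∈ Y) ∨ (u ∈ Y ∧ v ∈ X))
    (v : V) (c : G.Walk v v) (hc : c.IsCycle) (hlen : c.length = 4)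
    (a₁ b₁ a₂ b₂ : V)
    (hdist : ({a₁, b₁, a₂, b₂} : Finset V).card = 4)
    (hH : Disjoint ({a₁, b₁, a₂, b₂} : Finset V) c.support.toFinset)
    (he₁ : G.Adj a₁ b₁) (he₂ : G.Adj a₂ b₂)
    (he : 5 ≤ ∑ w ∈ ({a₁, b₁, a₂, b₂} : Finset V),
        (c.support.toFinset.filter (fun u => G.Adj w u)).card) :
    ∃ (u : V) (c' : G.Walk u u) (p q : V) (P : G.Walk p q),
      c'.IsCycle ∧ c'.length = 4 ∧
      c'.support.toFinset ⊆ ({a₁, b₁, a₂, b₂} : Finset V) ∪ c.support.toFinset ∧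
      P.IsPath ∧ P.support.length = 4 ∧
      P.support.toFinset ⊆ ({a₁, b₁, a₂, b₂} : Finset V) ∪ c.support.toFinset ∧
      List.Disjoint P.support c'.support := by
  obtain ⟨s₁, s₂, s₃, h1, h2, h3, h4, hsupp, k1v, k2v, k3v, k12, k13, k23⟩ :=
    cycle_struct G v c hc hlen
  have hndH := nodup_of_card4 hdist
  simp only [List.nodup_cons, List.mem_cons, List.not_mem_nil, or_false,
    List.mem_singleton, List.nodup_nil, and_true, not_or] at hndH
  obtain ⟨⟨m12, m13, m14⟩, ⟨m23, m24⟩, m34, -⟩ := hndH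
  have hDXY : ∀ w : V, w ∈ X → w ∈ Y → False := fun w hw hw' =>
    Finset.disjoint_left.mp hdisj hw hw'
  have hXc : ∀ w : V, w ∈ X ∨ w ∈ Y := by
    intro w
    have h : w ∈ X ∪ Y := by rw [hcover]; exact Finset.mem_univ w
    exact Finset.mem_union.mp h
  -- orientation of the bipartition on the cycle
  obtain ⟨p₁, p₂, q₁, q₂, hp1, hp2, hq1, hq2, h11, h12, h21, h22, hTeq⟩ :
      ∃ p₁ p₂ q₁ q₂ : V, p₁ ∈ X ∧ p₂ ∈ X ∧ q₁ ∈ Y ∧ q₂ ∈ Y ∧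
        G.Adj p₁ q₁ ∧ G.Adj p₁ q₂ ∧ G.Adj p₂ q₁ ∧ G.Adj p₂ q₂ ∧
        ({p₁, p₂, q₁, q₂} : Finset V) = {v, s₁, s₂, s₃} := by
    have oppX : ∀ u w : V, G.Adj u w → u ∈ X → w ∈ Y := by
      intro u w h hu
      rcases hbip _ _ h with ⟨-, h'⟩ | ⟨h', -⟩
      · exact h'
      · exact absurd h' (fun h' => hDXY _ hu h')
    have oppY : ∀ u w : V, G.Adj u w → u ∈ Y → w ∈ X := by
      intro u w h hu
      rcases hbip _ _ h with ⟨h', -⟩ | ⟨-, h'⟩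
      · exact absurd h' (fun h' => hDXY _ h' hu)
      · exact h'
    rcases hXc v with hv | hv
    · have hs1 : s₁ ∈ Y := oppX _ _ h1 hv
      have hs2 : s₂ ∈ X := oppY _ _ h2 hs1
      have hs3 : s₃ ∈ Y := oppX _ _ h3 hs2
      exact ⟨v, s₂, s₁, s₃, hv, hs2, hs1, hs3, h1, h4.symm, h2.symm, h3,
        by ext a; simp; tauto⟩
    · have hs1 : s₁ ∈ X := oppY _ _ h1 hv
      have hs2 : s₂ ∈ Y := oppX _ _ h2 hs1
      have hs3 : s₃ ∈ X := oppY _ _ h3 hs2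
      exact ⟨s₁, s₃, v, s₂, hs1, hs3, hv, hs2, h1.symm, h2, h4, h3.symm,
        by ext a; simp; tauto⟩
  rw [hsupp, ← hTeq] at he hH ⊢
  -- expand the degree sum
  have nm1 : a₁ ∉ ({b₁, a₂, b₂} : Finset V) := by
    simp only [Finset.mem_insert, Finset.mem_singleton, not_or]
    exact ⟨m12, m13, m14⟩
  have nm2 : b₁ ∉ ({a₂, b₂} : Finset V) := by
    simp only [Finset.mem_insert, Finset.mem_singleton, not_or]
    exact ⟨m23, m24⟩
  have nm3 : a₂ ∉ ({b₂} : Finset V) := by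
    simp only [Finset.mem_singleton]
    exact m34
  rw [Finset.sum_insert nm1, Finset.sum_insert nm2, Finset.sum_insert nm3,
      Finset.sum_singleton] at he
  -- every H-vertex has at most 2 neighbours on the cycle
  have hbound : ∀ w : V,
      (({p₁,p₂,q₁,q₂} : Finset V).filter (fun u => G.Adj w u)).card ≤ 2 := by
    intro w
    have hpair : ∀ x y : V, ({x, y} : Finset V).card ≤ 2 := by
      intro x y; apply le_trans (Finset.card_insert_le _ _); simp
    rcases hXc w with hw | hw
    · have hsub : (({p₁,p₂,q₁,q₂} : Finset V).filter (fun u => G.Adj w u)) ⊆ {q₁,q₂} := by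
        intro u hu
        rw [Finset.mem_filter] at hu
        obtain ⟨huT, hadj⟩ := hu
        have huY : u ∈ Y := by
          rcases hbip _ _ hadj with ⟨-, h⟩ | ⟨h, -⟩
          · exact h
          · exact absurd h (fun h => hDXY _ hw h)
        simp only [Finset.mem_insert, Finset.mem_singleton] at huT ⊢
        rcases huT with rfl | rfl | rfl | rfl
        · exact absurd huY (fun h => hDXY _ hp1 h)
        · exact absurd huY (fun h => hDXY _ hp2 h)
        · exact Or.inl rfl
        · exact Or.inr rfl
      exact le_trans (Finset.card_le_card hsub) (hpair _ _)
    · have hsub : (({p₁,p₂,q₁,q₂} : Finset V).filter (fun u => G.Adj w u)) ⊆ {p₁,p₂} := by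
        intro u hu
        rw [Finset.mem_filter] at hu
        obtain ⟨huT, hadj⟩ := hu
        have huX : u ∈ X := by
          rcases hbip _ _ hadj with ⟨h, -⟩ | ⟨-, h⟩
          · exact absurd h (fun h => hDXY _ h hw)
          · exact h
        simp only [Finset.mem_insert, Finset.mem_singleton] at huT ⊢
        rcases huT with rfl | rfl | rfl | rfl
        · exact Or.inl rfl
        · exact Or.inr rfl
        · exact absurd huX (fun h => hDXY _ h hq1)
        · exact absurd huX (fun h => hDXY _ h hq2)
      exact le_trans (Finset.card_le_card hsub) (hpair _ _)
  have hex1 : ∀ w : V,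
      1 ≤ (({p₁,p₂,q₁,q₂} : Finset V).filter (fun u => G.Adj w u)).card →
      ∃ c₀ ∈ ({p₁,p₂,q₁,q₂} : Finset V), G.Adj w c₀ := by
    intro w h
    obtain ⟨u, hu⟩ := Finset.card_pos.mp h
    rw [Finset.mem_filter] at hu
    exact ⟨u, hu.1, hu.2⟩
  have hex2 : ∀ w w' : V,
      1 ≤ (({p₁,p₂,q₁,q₂} : Finset V).filter (fun u => G.Adj w u)).card +
          (({p₁,p₂,q₁,q₂} : Finset V).filter (fun u => G.Adj w' u)).card →
      ∃ c₀ ∈ ({p₁,p₂,q₁,q₂} : Finset V), G.Adj w c₀ ∨ G.Adj w' c₀ := by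
    intro w w' h
    rcases Nat.lt_or_ge (({p₁,p₂,q₁,q₂} : Finset V).filter (fun u => G.Adj w u)).card 1
      with h' | h'
    · obtain ⟨u, hu1, hu2⟩ := hex1 w' (by omega)
      exact ⟨u, hu1, Or.inr hu2⟩
    · obtain ⟨u, hu1, hu2⟩ := hex1 w h'
      exact ⟨u, hu1, Or.inl hu2⟩
  -- the target vertex set and its properties
  set S : Finset V := ({a₁, b₁, a₂, b₂} : Finset V) ∪ {p₁, p₂, q₁, q₂} with hS
  have hTS : ∀ u ∈ ({p₁,p₂,q₁,q₂} : Finset V), u ∈ S := fun u hu =>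
    Finset.mem_union_right _ hu
  have hHS : ∀ u ∈ ({a₁,b₁,a₂,b₂} : Finset V), u ∈ S := fun u hu =>
    Finset.mem_union_left _ hu
  have hcT : ({p₁,p₂,q₁,q₂} : Finset V).card = 4 := by
    rw [hTeq]
    have : ({v,s₁,s₂,s₃} : Finset V) = ([v,s₁,s₂,s₃] : List V).toFinset := by simp
    rw [this, List.toFinset_card_of_nodup]
    · rfl
    · simp only [List.nodup_cons, List.mem_cons, List.not_mem_nil, or_false,
        List.mem_singleton, List.nodup_nil, and_true, not_or]
      exact ⟨⟨k1v.symm, k2v.symm, k3v.symm⟩, ⟨k12, k13⟩, k23, not_false⟩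
  have hcardS : S.card = 8 := by
    rw [hS, Finset.card_union_of_disjoint hH, hdist, hcT]
  have hmemS : p₁ ∈ S ∧ p₂ ∈ S ∧ q₁ ∈ S ∧ q₂ ∈ S := by
    refine ⟨hTS _ ?_, hTS _ ?_, hTS _ ?_, hTS _ ?_⟩ <;> simp
  obtain ⟨sp1, sp2, sq1, sq2⟩ := hmemS
  have hmemH : a₁ ∈ S ∧ b₁ ∈ S ∧ a₂ ∈ S ∧ b₂ ∈ S := by
    refine ⟨hHS _ ?_, hHS _ ?_, hHS _ ?_, hHS _ ?_⟩ <;> simp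
  obtain ⟨sa1, sb1, sa2, sb2⟩ := hmemH
  have hb1 := hbound a₁
  have hb2 := hbound b₁
  have hb3 := hbound a₂
  have hb4 := hbound b₂
  have hcases :
      ((({p₁,p₂,q₁,q₂} : Finset V).filter (fun u => G.Adj a₁ u)).card = 2 ∧
        1 ≤ (({p₁,p₂,q₁,q₂} : Finset V).filter (fun u => G.Adj b₁ u)).card ∧
        1 ≤ (({p₁,p₂,q₁,q₂} : Finset V).filter (fun u => G.Adj a₂ u)).card +
            (({p₁,p₂,q₁,q₂} : Finset V).filter (fun u => G.Adj b₂ u)).card) ∨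
      ((({p₁,p₂,q₁,q₂} : Finset V).filter (fun u => G.Adj b₁ u)).card = 2 ∧
        1 ≤ (({p₁,p₂,q₁,q₂} : Finset V).filter (fun u => G.Adj a₁ u)).card ∧
        1 ≤ (({p₁,p₂,q₁,q₂} : Finset V).filter (fun u => G.Adj a₂ u)).card +
            (({p₁,p₂,q₁,q₂} : Finset V).filter (fun u => G.Adj b₂ u)).card) ∨
      ((({p₁,p₂,q₁,q₂} : Finset V).filter (fun u => G.Adj a₂ u)).card = 2 ∧
        1 ≤ (({p₁,p₂,q₁,q₂} : Finset V).filter (fun u => G.Adj b₂ u)).card ∧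
        1 ≤ (({p₁,p₂,q₁,q₂} : Finset V).filter (fun u => G.Adj a₁ u)).card +
            (({p₁,p₂,q₁,q₂} : Finset V).filter (fun u => G.Adj b₁ u)).card) ∨
      ((({p₁,p₂,q₁,q₂} : Finset V).filter (fun u => G.Adj b₂ u)).card = 2 ∧
        1 ≤ (({p₁,p₂,q₁,q₂} : Finset V).filter (fun u => G.Adj a₂ u)).card ∧
        1 ≤ (({p₁,p₂,q₁,q₂} : Finset V).filter (fun u => G.Adj a₁ u)).card +
            (({p₁,p₂,q₁,q₂} : Finset V).filter (fun u => G.Adj b₁ u)).card) := by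
    omega
  rcases hcases with ⟨hA, hB, hX'⟩ | ⟨hA, hB, hX'⟩ | ⟨hA, hB, hX'⟩ | ⟨hA, hB, hX'⟩
  · have e : ({p₁,p₂,q₁,q₂,a₁,b₁,a₂,b₂} : Finset V) = S := by
      rw [hS]; clear hcardS hcT hb1 hb2 hb3 hb4 hA hB hX' he hdist
      ext a
      simp only [Finset.mem_insert, Finset.mem_singleton, Finset.mem_union]
      constructor
      · rintro (rfl|rfl|rfl|rfl|rfl|rfl|rfl|rfl) <;> simp
      · rintro ((rfl|rfl|rfl|rfl)|(rfl|rfl|rfl|rfl)) <;> simp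
    exact main_aux G X Y hdisj hbip hXc S hp1 hp2 hq1 hq2
      (by rw [e]; exact hcardS) ⟨sp1, sp2, sq1, sq2, sa1, sb1, sa2, sb2⟩
      h11 h12 h21 h22 he₁ he₂ hA (hex1 _ hB) (hex2 _ _ hX')
  · have e : ({p₁,p₂,q₁,q₂,b₁,a₁,a₂,b₂} : Finset V) = S := by
      rw [hS]; clear hcardS hcT hb1 hb2 hb3 hb4 hA hB hX' he hdist
      ext a
      simp only [Finset.mem_insert, Finset.mem_singleton, Finset.mem_union]
      constructor
      · rintro (rfl|rfl|rfl|rfl|rfl|rfl|rfl|rfl) <;> simp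
      · rintro ((rfl|rfl|rfl|rfl)|(rfl|rfl|rfl|rfl)) <;> simp
    exact main_aux G X Y hdisj hbip hXc S hp1 hp2 hq1 hq2
      (by rw [e]; exact hcardS) ⟨sp1, sp2, sq1, sq2, sb1, sa1, sa2, sb2⟩
      h11 h12 h21 h22 he₁.symm he₂ hA (hex1 _ hB) (hex2 _ _ hX')
  · have e : ({p₁,p₂,q₁,q₂,a₂,b₂,a₁,b₁} : Finset V) = S := by
      rw [hS]; clear hcardS hcT hb1 hb2 hb3 hb4 hA hB hX' he hdist
      ext a
      simp only [Finset.mem_insert, Finset.mem_singleton, Finset.mem_union]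
      constructor
      · rintro (rfl|rfl|rfl|rfl|rfl|rfl|rfl|rfl) <;> simp
      · rintro ((rfl|rfl|rfl|rfl)|(rfl|rfl|rfl|rfl)) <;> simp
    exact main_aux G X Y hdisj hbip hXc S hp1 hp2 hq1 hq2
      (by rw [e]; exact hcardS) ⟨sp1, sp2, sq1, sq2, sa2, sb2, sa1, sb1⟩
      h11 h12 h21 h22 he₂ he₁ hA (hex1 _ hB) (hex2 _ _ hX')
  · have e : ({p₁,p₂,q₁,q₂,b₂,a₂,a₁,b₁} : Finset V) = S := by
      rw [hS]; clear hcardS hcT hb1 hb2 hb3 hb4 hA hB hX' he hdist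
      ext a
      simp only [Finset.mem_insert, Finset.mem_singleton, Finset.mem_union]
      constructor
      · rintro (rfl|rfl|rfl|rfl|rfl|rfl|rfl|rfl) <;> simp
      · rintro ((rfl|rfl|rfl|rfl)|(rfl|rfl|rfl|rfl)) <;> simp
    exact main_aux G X Y hdisj hbip hXc S hp1 hp2 hq1 hq2
      (by rw [e]; exact hcardS) ⟨sp1, sp2, sq1, sq2, sb2, sa2, sa1, sb1⟩
      h11 h12 h21 h22 he₂.symm he₁ hA (hex1 _ hB) (hex2 _ _ hX')
end

section
/- Let C be a 4-cycle in a bipartite graph G and let P be a path on 4 vertices in G − C. If the number of edges between V(P) and V(C) is at least 6, then either the induced subgraph on V(C) ∪ V(P) contains two vertex-disjoint 4-cycles, or some endvertex z of P satisfies d_C(z) = 0. -/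
open SimpleGraph

set_option linter.unusedSectionVars false
set_option maxHeartbeats 4000000

section QuadHelpers

variable {V : Type*} [DecidableEq V] {G : SimpleGraph V} [DecidableRel G.Adj]

lemma walk_len4_decomp {u w : V} (W : G.Walk u w) (h : W.length = 4) :
    ∃ (x y z : V) (h1 : G.Adj u x) (h2 : G.Adj x y) (h3 : G.Adj y z) (h4 : G.Adj z w),
      W = .cons h1 (.cons h2 (.cons h3 (.cons h4 .nil))) := by
  match W with
  | .cons h1 (.cons h2 (.cons h3 (.cons h4 .nil))) => exact ⟨_,_,_,h1,h2,h3,h4,rfl⟩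
  | .nil => simp at h
  | .cons _ .nil => simp at h
  | .cons _ (.cons _ .nil) => simp at h
  | .cons _ (.cons _ (.cons _ .nil)) => simp at h
  | .cons _ (.cons _ (.cons _ (.cons _ (.cons _ _)))) => simp at h

lemma walk_len3_decomp {u w : V} (W : G.Walk u w) (h : W.length = 3) :
    ∃ (x y : V) (h1 : G.Adj u x) (h2 : G.Adj x y) (h3 : G.Adj y w),
      W = .cons h1 (.cons h2 (.cons h3 .nil)) := by
  match W with
  | .cons h1 (.cons h2 (.cons h3 .nil)) => exact ⟨_,_,h1,h2,h3,rfl⟩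
  | .nil => simp at h
  | .cons _ .nil => simp at h
  | .cons _ (.cons _ .nil) => simp at h
  | .cons _ (.cons _ (.cons _ (.cons _ _))) => simp at h

def cyc4 {a b c d : V} (h1 : G.Adj a b) (h2 : G.Adj b c) (h3 : G.Adj c d) (h4 : G.Adj d a) :
    G.Walk a a := .cons h1 (.cons h2 (.cons h3 (.cons h4 .nil)))

lemma cyc4_support {a b c d : V} (h1 : G.Adj a b) (h2 : G.Adj b c) (h3 : G.Adj c d)
    (h4 : G.Adj d a) : (cyc4 h1 h2 h3 h4).support = [a, b, c, d, a] := by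
  simp [cyc4]

lemma cyc4_isCycle {a b c d : V} (h1 : G.Adj a b) (h2 : G.Adj b c) (h3 : G.Adj c d)
    (h4 : G.Adj d a) (hab : a ≠ b) (hac : a ≠ c) (had : a ≠ d) (hbc : b ≠ c)
    (hbd : b ≠ d) (hcd : c ≠ d) : (cyc4 h1 h2 h3 h4).IsCycle := by
  simp [cyc4, Walk.isCycle_def, Walk.isTrail_def, Sym2.eq_iff, List.Nodup]
  aesop

lemma cyc4_length {a b c d : V} (h1 : G.Adj a b) (h2 : G.Adj b c) (h3 : G.Adj c d)
    (h4 : G.Adj d a) : (cyc4 h1 h2 h3 h4).length = 4 := by simp [cyc4]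

lemma two_quads (S : Finset V) (x1 x2 x3 x4 y1 y2 y3 y4 : V)
    (h12 : G.Adj x1 x2) (h23 : G.Adj x2 x3) (h34 : G.Adj x3 x4) (h41 : G.Adj x4 x1)
    (k12 : G.Adj y1 y2) (k23 : G.Adj y2 y3) (k34 : G.Adj y3 y4) (k41 : G.Adj y4 y1)
    (hnd : ([x1,x2,x3,x4,y1,y2,y3,y4] : List V).Nodup)
    (hmem : ∀ z ∈ ([x1,x2,x3,x4,y1,y2,y3,y4] : List V), z ∈ S) :
    ∃ (u₁ u₂ : V) (c₁ : G.Walk u₁ u₁) (c₂ : G.Walk u₂ u₂),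
      c₁.IsCycle ∧ c₁.length = 4 ∧ c₂.IsCycle ∧ c₂.length = 4 ∧
      c₁.support.toFinset ⊆ S ∧ c₂.support.toFinset ⊆ S ∧
      List.Disjoint c₁.support c₂.support := by
  simp only [List.nodup_cons, List.mem_cons, List.not_mem_nil, or_false, not_or,
    List.nodup_nil, and_true, List.mem_singleton, List.forall_mem_cons,
    List.forall_mem_singleton] at hnd hmem
  refine ⟨x1, y1, cyc4 h12 h23 h34 h41, cyc4 k12 k23 k34 k41,
    cyc4_isCycle _ _ _ _ (by tauto) (by tauto) (by tauto) (by tauto) (by tauto) (by tauto),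
    cyc4_length _ _ _ _,
    cyc4_isCycle _ _ _ _ (by tauto) (by tauto) (by tauto) (by tauto) (by tauto) (by tauto),
    cyc4_length _ _ _ _, ?_, ?_, ?_⟩
  · rw [cyc4_support]; intro w hw
    simp only [List.mem_toFinset, List.mem_cons, List.not_mem_nil, or_false] at hw
    exact hmem w (by tauto)
  · rw [cyc4_support]; intro w hw
    simp only [List.mem_toFinset, List.mem_cons, List.not_mem_nil, or_false] at hw
    exact hmem w (by tauto)
  · rw [cyc4_support, cyc4_support]
    intro w hw hw'
    simp only [List.mem_cons, List.not_mem_nil, or_false] at hw hw'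
    rcases hw with rfl|rfl|rfl|rfl|rfl <;> rcases hw' with rfl|rfl|rfl|rfl|rfl <;> tauto

lemma filt_card {z e1 e2 f1 f2 : V} {S : Finset V} (hS : S = {e1,e2,f1,f2}) (h12 : e1 ≠ e2)
    (hf1 : ¬G.Adj z f1) (hf2 : ¬G.Adj z f2) :
    (S.filter (fun u => G.Adj z u)).card
      = (if G.Adj z e1 then 1 else 0) + (if G.Adj z e2 then 1 else 0) := by
  subst hS
  rw [show ({e1,e2,f1,f2} : Finset V) = insert e1 (insert e2 (insert f1 {f2})) from rfl,
    Finset.filter_insert, Finset.filter_insert, Finset.filter_insert, Finset.filter_singleton]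
  simp only [hf1, hf2, if_false]
  split_ifs <;> simp_all [Finset.card_pair]

lemma keyProp (A1 A2 B1 B2 C1 C2 D1 D2 : Prop)
    [Decidable A1] [Decidable A2] [Decidable B1] [Decidable B2]
    [Decidable C1] [Decidable C2] [Decidable D1] [Decidable D2]
    (h : 6 ≤ (((if A1 then 1 else 0) + (if A2 then 1 else 0))
      + (((if B1 then 1 else 0) + (if B2 then 1 else 0))
      + (((if C1 then 1 else 0) + (if C2 then 1 else 0))
      + ((if D1 then 1 else 0) + (if D2 then 1 else 0)))) : ℕ))
    (hA : A1 ∨ A2) (hD : D1 ∨ D2) :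
    (A1∧B1∧C2∧D2) ∨ (A1∧B2∧C2∧D1) ∨ (A2∧B1∧C1∧D2) ∨ (A2∧B2∧C1∧D1) ∨
    (A1∧C1∧D1∧D2) ∨ (A2∧C2∧D1∧D2) ∨ (A1∧A2∧B1∧D1) ∨ (A1∧A2∧B2∧D2) := by
  by_cases A1 <;> by_cases A2 <;> by_cases B1 <;> by_cases B2 <;>
    by_cases C1 <;> by_cases C2 <;> by_cases D1 <;> by_cases D2 <;> simp_all

lemma core (S : Finset V) (z1 z2 z3 z4 e1 e2 f1 f2 : V)
    (hz12 : G.Adj z1 z2) (hz23 : G.Adj z2 z3) (hz34 : G.Adj z3 z4)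
    (h11 : G.Adj e1 f1) (h12 : G.Adj e1 f2) (h21 : G.Adj e2 f1) (h22 : G.Adj e2 f2)
    (hnd : ([z1,z2,z3,z4,e1,e2,f1,f2] : List V).Nodup)
    (hS : ∀ x ∈ ([z1,z2,z3,z4,e1,e2,f1,f2] : List V), x ∈ S)
    (key : (G.Adj z1 e1 ∧ G.Adj z2 f1 ∧ G.Adj z3 e2 ∧ G.Adj z4 f2) ∨
      (G.Adj z1 e1 ∧ G.Adj z2 f2 ∧ G.Adj z3 e2 ∧ G.Adj z4 f1) ∨
      (G.Adj z1 e2 ∧ G.Adj z2 f1 ∧ G.Adj z3 e1 ∧ G.Adj z4 f2) ∨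
      (G.Adj z1 e2 ∧ G.Adj z2 f2 ∧ G.Adj z3 e1 ∧ G.Adj z4 f1) ∨
      (G.Adj z1 e1 ∧ G.Adj z3 e1 ∧ G.Adj z4 f1 ∧ G.Adj z4 f2) ∨
      (G.Adj z1 e2 ∧ G.Adj z3 e2 ∧ G.Adj z4 f1 ∧ G.Adj z4 f2) ∨
      (G.Adj z1 e1 ∧ G.Adj z1 e2 ∧ G.Adj z2 f1 ∧ G.Adj z4 f1) ∨
      (G.Adj z1 e1 ∧ G.Adj z1 e2 ∧ G.Adj z2 f2 ∧ G.Adj z4 f2)) :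
    ∃ (u₁ u₂ : V) (c₁ : G.Walk u₁ u₁) (c₂ : G.Walk u₂ u₂),
      c₁.IsCycle ∧ c₁.length = 4 ∧ c₂.IsCycle ∧ c₂.length = 4 ∧
      c₁.support.toFinset ⊆ S ∧ c₂.support.toFinset ⊆ S ∧
      List.Disjoint c₁.support c₂.support := by
  simp only [List.nodup_cons, List.mem_cons, List.not_mem_nil, or_false, not_or,
    List.nodup_nil, and_true, List.mem_singleton, List.forall_mem_cons,
    List.forall_mem_singleton] at hnd
  rcases key with ⟨A,B,C,D⟩|⟨A,B,C,D⟩|⟨A,B,C,D⟩|⟨A,B,C,D⟩|⟨A,B,C,D⟩|⟨A,B,C,D⟩|⟨A,B,C,D⟩|⟨A,B,C,D⟩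
  · exact two_quads S z1 z2 f1 e1 z3 z4 f2 e2 hz12 B h11.symm A.symm hz34 D h22.symm C.symm
      (by simp only [List.nodup_cons, List.mem_cons, List.not_mem_nil, or_false, not_or,
        List.nodup_nil, and_true, List.mem_singleton]; tauto)
      (by intro x hx; apply hS; simp only [List.mem_cons, List.not_mem_nil] at hx ⊢; tauto)
  · exact two_quads S z1 z2 f2 e1 z3 z4 f1 e2 hz12 B h12.symm A.symm hz34 D h21.symm C.symm
      (by simp only [List.nodup_cons, List.mem_cons, List.not_mem_nil, or_false, not_or,
        List.nodup_nil, and_true, List.mem_singleton]; tauto)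
      (by intro x hx; apply hS; simp only [List.mem_cons, List.not_mem_nil] at hx ⊢; tauto)
  · exact two_quads S z1 z2 f1 e2 z3 z4 f2 e1 hz12 B h21.symm A.symm hz34 D h12.symm C.symm
      (by simp only [List.nodup_cons, List.mem_cons, List.not_mem_nil, or_false, not_or,
        List.nodup_nil, and_true, List.mem_singleton]; tauto)
      (by intro x hx; apply hS; simp only [List.mem_cons, List.not_mem_nil] at hx ⊢; tauto)
  · exact two_quads S z1 z2 f2 e2 z3 z4 f1 e1 hz12 B h22.symm A.symm hz34 D h11.symm C.symm
      (by simp only [List.nodup_cons, List.mem_cons, List.not_mem_nil, or_false, not_or,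
        List.nodup_nil, and_true, List.mem_singleton]; tauto)
      (by intro x hx; apply hS; simp only [List.mem_cons, List.not_mem_nil] at hx ⊢; tauto)
  · exact two_quads S z1 z2 z3 e1 z4 f1 e2 f2 hz12 hz23 B A.symm C h21.symm h22 D.symm
      (by simp only [List.nodup_cons, List.mem_cons, List.not_mem_nil, or_false, not_or,
        List.nodup_nil, and_true, List.mem_singleton]; tauto)
      (by intro x hx; apply hS; simp only [List.mem_cons, List.not_mem_nil] at hx ⊢; tauto)
  · exact two_quads S z1 z2 z3 e2 z4 f1 e1 f2 hz12 hz23 B A.symm C h11.symm h12 D.symm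
      (by simp only [List.nodup_cons, List.mem_cons, List.not_mem_nil, or_false, not_or,
        List.nodup_nil, and_true, List.mem_singleton]; tauto)
      (by intro x hx; apply hS; simp only [List.mem_cons, List.not_mem_nil] at hx ⊢; tauto)
  · exact two_quads S z2 z3 z4 f1 z1 e1 f2 e2 hz23 hz34 D C.symm A h12 h22.symm B.symm
      (by simp only [List.nodup_cons, List.mem_cons, List.not_mem_nil, or_false, not_or,
        List.nodup_nil, and_true, List.mem_singleton]; tauto)
      (by intro x hx; apply hS; simp only [List.mem_cons, List.not_mem_nil] at hx ⊢; tauto)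
  · exact two_quads S z2 z3 z4 f2 z1 e1 f1 e2 hz23 hz34 D C.symm A h11 h21.symm B.symm
      (by simp only [List.nodup_cons, List.mem_cons, List.not_mem_nil, or_false, not_or,
        List.nodup_nil, and_true, List.mem_singleton]; tauto)
      (by intro x hx; apply hS; simp only [List.mem_cons, List.not_mem_nil] at hx ⊢; tauto)


lemma iff_not_not {A B C : Prop} (h1 : A ↔ ¬B) (h2 : B ↔ ¬C) : A ↔ C := by tauto
lemma iff_notr {A B C : Prop} (h1 : A ↔ ¬B) (h2 : A ↔ ¬C) : B ↔ C := by tauto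
lemma not_iff_to {A B C : Prop} (h : ¬(A ↔ B)) (h2 : B ↔ ¬C) : A ↔ C := by tauto
lemma not_iff_not' {A B : Prop} (h : ¬(A ↔ B)) : A ↔ ¬B := by tauto

lemma list_perm1 (v a b d : V) : ([v,a,b,d,v] : List V).toFinset = {a,d,v,b} := by
  ext x; simp; tauto
lemma list_perm2 (v a b d : V) : ([v,a,b,d,v] : List V).toFinset = {v,b,a,d} := by
  ext x; simp; tauto
lemma list_toFinset4 (p z2 z3 q : V) :
    ([p,z2,z3,q] : List V).toFinset = insert p (insert z2 (insert z3 ({q} : Finset V))) := by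
  simp

end QuadHelpers


set_option maxHeartbeats 4000000 in
/-- Lemma 2(3): a quadrilateral C and a disjoint path P on 4 vertices with
e(P, C) ≥ 6 yield either two disjoint quadrilaterals inside V(C) ∪ V(P), or
an endvertex z of P with d_C(z) = 0. -/
theorem quad_plus_path4 {V : Type*} [Fintype V] [DecidableEq V]
    (G : SimpleGraph V) [DecidableRel G.Adj]
    (X Y : Finset V)
    (hdisj : Disjoint X Y) (hcover : X ∪ Y = Finset.univ)
    (hbip : ∀ u v : V, G.Adj u v → (u ∈ X ∧ v ∈ Y) ∨ (u ∈ Y ∧ v ∈ X))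
    (v : V) (c : G.Walk v v) (hc : c.IsCycle) (hlen : c.length = 4)
    (p q : V) (P : G.Walk p q) (hP : P.IsPath) (hPlen : P.support.length = 4)
    (hPC : Disjoint P.support.toFinset c.support.toFinset)
    (he : 6 ≤ ∑ w ∈ P.support.toFinset,
        (c.support.toFinset.filter (fun u => G.Adj w u)).card) :
    (∃ (u₁ u₂ : V) (c₁ : G.Walk u₁ u₁) (c₂ : G.Walk u₂ u₂),
      c₁.IsCycle ∧ c₁.length = 4 ∧ c₂.IsCycle ∧ c₂.length = 4 ∧
      c₁.support.toFinset ⊆ P.support.toFinset ∪ c.support.toFinset ∧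
      c₂.support.toFinset ⊆ P.support.toFinset ∪ c.support.toFinset ∧
      List.Disjoint c₁.support c₂.support) ∨
    ((c.support.toFinset.filter (fun u => G.Adj p u)).card = 0 ∨
      (c.support.toFinset.filter (fun u => G.Adj q u)).card = 0) := by
  obtain ⟨a, b, d, hva, hab, hbd, hdv, rfl⟩ := walk_len4_decomp c hlen
  have hPlen3 : P.length = 3 := by have := P.length_support; omega
  obtain ⟨z2, z3, hpz2, hz23, hz3q, rfl⟩ := walk_len3_decomp P hPlen3
  have hsupC : (Walk.cons hva (Walk.cons hab (Walk.cons hbd (Walk.cons hdv Walk.nil)))).support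
      = [v, a, b, d, v] := by simp
  have hsupP : (Walk.cons hpz2 (Walk.cons hz23 (Walk.cons hz3q Walk.nil))).support
      = [p, z2, z3, q] := by simp
  -- distinctness of cycle vertices
  have hndc := hc.support_nodup
  rw [hsupC] at hndc
  simp only [List.tail_cons, List.nodup_cons, List.mem_cons, List.not_mem_nil, or_false,
    not_or, List.nodup_nil, and_true, List.mem_singleton] at hndc
  obtain ⟨⟨hab', had', hav⟩, ⟨hbd', hbv⟩, hdv'⟩ := hndc
  -- distinctness of path vertices
  have hndp := hP.support_nodup
  rw [hsupP] at hndp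
  simp only [List.nodup_cons, List.mem_cons, List.not_mem_nil, or_false, not_or,
    List.nodup_nil, and_true, List.mem_singleton] at hndp
  obtain ⟨⟨hpz2', hpz3, hpq⟩, ⟨hz2z3, hz2q⟩, hz3q'⟩ := hndp
  -- cross distinctness
  have hcross : ∀ x ∈ ([p,z2,z3,q] : List V), ∀ y ∈ ([v,a,b,d] : List V), x ≠ y := by
    intro x hx y hy hxy
    have h1 : x ∈ (Walk.cons hpz2 (Walk.cons hz23 (Walk.cons hz3q Walk.nil))).support.toFinset := by
      rw [hsupP, List.mem_toFinset]; exact hx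
    have h2 : x ∈ (Walk.cons hva (Walk.cons hab (Walk.cons hbd (Walk.cons hdv Walk.nil)))).support.toFinset := by
      rw [hsupC, List.mem_toFinset]; subst hxy
      simp only [List.mem_cons, List.not_mem_nil, or_false] at hy ⊢; tauto
    exact Finset.disjoint_left.mp hPC h1 h2
  have npv := hcross p (by simp) v (by simp)
  have npa := hcross p (by simp) a (by simp)
  have npb := hcross p (by simp) b (by simp)
  have npd := hcross p (by simp) d (by simp)
  have n2v := hcross z2 (by simp) v (by simp)
  have n2a := hcross z2 (by simp) a (by simp)
  have n2b := hcross z2 (by simp) b (by simp)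
  have n2d := hcross z2 (by simp) d (by simp)
  have n3v := hcross z3 (by simp) v (by simp)
  have n3a := hcross z3 (by simp) a (by simp)
  have n3b := hcross z3 (by simp) b (by simp)
  have n3d := hcross z3 (by simp) d (by simp)
  have nqv := hcross q (by simp) v (by simp)
  have nqa := hcross q (by simp) a (by simp)
  have nqb := hcross q (by simp) b (by simp)
  have nqd := hcross q (by simp) d (by simp)
  clear hcross
  -- bipartite side facts
  have hopp : ∀ u w : V, G.Adj u w → ((u ∈ X) ↔ (w ∉ X)) := by
    intro u w h
    rcases hbip u w h with ⟨hu, hw⟩ | ⟨hu, hw⟩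
    · exact iff_of_true hu (fun hwX => Finset.disjoint_left.mp hdisj hwX hw)
    · exact iff_of_false (fun hX => Finset.disjoint_left.mp hdisj hX hu) (fun hcon => hcon hw)
  have hnadj : ∀ u w : V, ((u ∈ X) ↔ (w ∈ X)) → ¬G.Adj u w := by
    intro u w hiff hadj
    have h2 := hopp u w hadj
    rw [h2] at hiff
    exact iff_not_self hiff.symm
  have s1 := hopp p z2 hpz2
  have s2 := hopp z2 z3 hz23
  have s3 := hopp z3 q hz3q
  have t1 := hopp v a hva
  have t2 := hopp a b hab
  have t3 := hopp b d hbd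
  have t4 := hopp d v hdv
  have hvb : (v ∈ X) ↔ (b ∈ X) := iff_not_not t1 t2
  have had2 : (a ∈ X) ↔ (d ∈ X) := iff_not_not t2 t3
  have hp3 : (p ∈ X) ↔ (z3 ∈ X) := iff_not_not s1 s2
  have h2q : (z2 ∈ X) ↔ (q ∈ X) := iff_not_not s2 s3
  set CS := (Walk.cons hva (Walk.cons hab (Walk.cons hbd (Walk.cons hdv Walk.nil)))).support.toFinset with hCS
  have hCS1 : CS = ({a, d, v, b} : Finset V) := by rw [hCS, hsupC]; exact list_perm1 v a b d
  have hCS2 : CS = ({v, b, a, d} : Finset V) := by rw [hCS, hsupC]; exact list_perm2 v a b d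
  -- rewrite the sum
  rw [hsupP, list_toFinset4,
    Finset.sum_insert (by simp [hpz2', hpz3, hpq]),
    Finset.sum_insert (by simp [hz2z3, hz2q]),
    Finset.sum_insert (by simp [hz3q']), Finset.sum_singleton] at he
  by_cases hp0 : (CS.filter (fun u => G.Adj p u)).card = 0
  · exact Or.inr (Or.inl hp0)
  by_cases hq0 : (CS.filter (fun u => G.Adj q u)).card = 0
  · exact Or.inr (Or.inr hq0)
  by_cases hside : ((p ∈ X) ↔ (v ∈ X))
  · -- p on the same side as v : p, z3 see {a,d}; z2, q see {v,b}
    have h2a : (z2 ∈ X) ↔ (a ∈ X) := iff_notr s1 (hside.trans t1)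
    have hfp := filt_card (G := G) (z := p) hCS1 had'
      (hnadj p v hside) (hnadj p b (hside.trans hvb))
    have hf2 := filt_card (G := G) (z := z2) hCS2 (Ne.symm hbv)
      (hnadj z2 a h2a) (hnadj z2 d (h2a.trans had2))
    have hf3 := filt_card (G := G) (z := z3) hCS1 had'
      (hnadj z3 v (hp3.symm.trans hside)) (hnadj z3 b ((hp3.symm.trans hside).trans hvb))
    have hfq := filt_card (G := G) (z := q) hCS2 (Ne.symm hbv)
      (hnadj q a (h2q.symm.trans h2a)) (hnadj q d ((h2q.symm.trans h2a).trans had2))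
    rw [hfp, hf2, hf3, hfq] at he
    have hA : G.Adj p a ∨ G.Adj p d := by
      by_cases h1 : G.Adj p a
      · exact Or.inl h1
      by_cases h2 : G.Adj p d
      · exact Or.inr h2
      exact absurd (by rw [hfp]; simp [h1, h2]) hp0
    have hD : G.Adj q v ∨ G.Adj q b := by
      by_cases h1 : G.Adj q v
      · exact Or.inl h1
      by_cases h2 : G.Adj q b
      · exact Or.inr h2
      exact absurd (by rw [hfq]; simp [h1, h2]) hq0
    have key := keyProp (G.Adj p a) (G.Adj p d) (G.Adj z2 v) (G.Adj z2 b)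
      (G.Adj z3 a) (G.Adj z3 d) (G.Adj q v) (G.Adj q b) he hA hD
    refine Or.inl (core _ p z2 z3 q a d v b hpz2 hz23 hz3q hva.symm hab hdv hbd.symm ?_ ?_ key)
    · simp only [List.nodup_cons, List.mem_cons, List.not_mem_nil, or_false, not_or,
        List.nodup_nil, and_true, List.mem_singleton]
      exact ⟨⟨hpz2', hpz3, hpq, npa, npd, npv, npb⟩, ⟨hz2z3, hz2q, n2a, n2d, n2v, n2b⟩,
        ⟨hz3q'.1, n3a, n3d, n3v, n3b⟩, ⟨nqa, nqd, nqv, nqb⟩,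
        ⟨had', hav, hab'⟩, ⟨hdv'.1, Ne.symm hbd'⟩, Ne.symm hbv, not_false⟩
    · intro x hx
      simp only [List.mem_cons, List.not_mem_nil, or_false] at hx
      rw [Finset.mem_union]
      rcases hx with rfl|rfl|rfl|rfl|rfl|rfl|rfl|rfl
      · left; rw [hsupP, List.mem_toFinset]; simp
      · left; rw [hsupP, List.mem_toFinset]; simp
      · left; rw [hsupP, List.mem_toFinset]; simp
      · left; rw [hsupP, List.mem_toFinset]; simp
      · right; rw [hCS, hsupC, List.mem_toFinset]; simp
      · right; rw [hCS, hsupC, List.mem_toFinset]; simp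
      · right; rw [hCS, hsupC, List.mem_toFinset]; simp
      · right; rw [hCS, hsupC, List.mem_toFinset]; simp
  · -- p on the opposite side of v : p, z3 see {v,b}; z2, q see {a,d}
    have hpa : (p ∈ X) ↔ (a ∈ X) := not_iff_to hside t1
    have h2v : (z2 ∈ X) ↔ (v ∈ X) := iff_notr s1 (not_iff_not' hside)
    have hfp := filt_card (G := G) (z := p) hCS2 (Ne.symm hbv)
      (hnadj p a hpa) (hnadj p d (hpa.trans had2))
    have hf2 := filt_card (G := G) (z := z2) hCS1 had'
      (hnadj z2 v h2v) (hnadj z2 b (h2v.trans hvb))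
    have hf3 := filt_card (G := G) (z := z3) hCS2 (Ne.symm hbv)
      (hnadj z3 a (hp3.symm.trans hpa)) (hnadj z3 d ((hp3.symm.trans hpa).trans had2))
    have hfq := filt_card (G := G) (z := q) hCS1 had'
      (hnadj q v (h2q.symm.trans h2v)) (hnadj q b ((h2q.symm.trans h2v).trans hvb))
    rw [hfp, hf2, hf3, hfq] at he
    have hA : G.Adj p v ∨ G.Adj p b := by
      by_cases h1 : G.Adj p v
      · exact Or.inl h1
      by_cases h2 : G.Adj p b
      · exact Or.inr h2
      exact absurd (by rw [hfp]; simp [h1, h2]) hp0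
    have hD : G.Adj q a ∨ G.Adj q d := by
      by_cases h1 : G.Adj q a
      · exact Or.inl h1
      by_cases h2 : G.Adj q d
      · exact Or.inr h2
      exact absurd (by rw [hfq]; simp [h1, h2]) hq0
    have key := keyProp (G.Adj p v) (G.Adj p b) (G.Adj z2 a) (G.Adj z2 d)
      (G.Adj z3 v) (G.Adj z3 b) (G.Adj q a) (G.Adj q d) he hA hD
    refine Or.inl (core _ p z2 z3 q v b a d hpz2 hz23 hz3q hva hdv.symm hab.symm hbd ?_ ?_ key)
    · simp only [List.nodup_cons, List.mem_cons, List.not_mem_nil, or_false, not_or,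
        List.nodup_nil, and_true, List.mem_singleton]
      exact ⟨⟨hpz2', hpz3, hpq, npv, npb, npa, npd⟩, ⟨hz2z3, hz2q, n2v, n2b, n2a, n2d⟩,
        ⟨hz3q'.1, n3v, n3b, n3a, n3d⟩, ⟨nqv, nqb, nqa, nqd⟩,
        ⟨Ne.symm hbv, Ne.symm hav, Ne.symm (hdv'.1)⟩, ⟨Ne.symm hab', hbd'⟩, had', not_false⟩
    · intro x hx
      simp only [List.mem_cons, List.not_mem_nil, or_false] at hx
      rw [Finset.mem_union]
      rcases hx with rfl|rfl|rfl|rfl|rfl|rfl|rfl|rfl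
      · left; rw [hsupP, List.mem_toFinset]; simp
      · left; rw [hsupP, List.mem_toFinset]; simp
      · left; rw [hsupP, List.mem_toFinset]; simp
      · left; rw [hsupP, List.mem_toFinset]; simp
      · right; rw [hCS, hsupC, List.mem_toFinset]; simp
      · right; rw [hCS, hsupC, List.mem_toFinset]; simp
      · right; rw [hCS, hsupC, List.mem_toFinset]; simp
      · right; rw [hCS, hsupC, List.mem_toFinset]; simp
end

section
/- Let G be a bipartite graph with S ⊆ X, and let P = x_1 y_1 x_2 y_2 ⋯ x_p y_p be a path of even order with x_1, x_p ∈ S and p ≥ 2. Suppose the induced subgraph G[V(P)] contains neither a feasible cycle (a cycle with at least 2 vertices of S) nor a path P' of even order with fewer vertices than P such that S ∩ V(P') = S ∩ V(P). Then within G[V(P)]: d(x_1) = 1, d(x_i) = 2 for every x_i ∈ S ∩ V(P) with x_i ≠ x_1, and d(y_p) ≤ 2. -/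
/-!
Index `P` as `P₀ = x₁, …, Pₙ = y_p`. A chord `Pᵢ Pⱼ` with `j ≥ i + 2` closes the cycle
`Pᵢ ⋯ Pⱼ Pᵢ` in `G[V(P)]`, which therefore carries at most one vertex of `S`. If that vertex is an
end of the chord, the path `P₀ ⋯ Pᵢ Pⱼ ⋯ Pₙ` has the same `S`-vertices, the same ends (hence even
order, `G` being bipartite) and fewer vertices. So a vertex of `S` is adjacent only to its
neighbours on `P`. If `y_p` had two neighbours `Pₐ, P_b` with `a < b < n - 1`, the cycle closed by
`Pₐ y_p` contains `x_p ∈ S`, so `Pₐ₊₁, …, P_b ∉ S`, and `P₀ ⋯ Pₐ y_p x_p ⋯ P_{b+1}` would again be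
a shorter path of even order with the same `S`-vertices.
-/

namespace SimpleGraph

variable {V : Type*} {G : SimpleGraph V}

def Coloring.ofBipartition [DecidableEq V] {X Y : Finset V} (hdisj : Disjoint X Y)
    (hbip : ∀ u v : V, G.Adj u v → (u ∈ X ∧ v ∈ Y) ∨ (u ∈ Y ∧ v ∈ X)) : G.Coloring Bool :=
  Coloring.mk (fun v => decide (v ∈ X)) fun {u v} h => by
    rcases hbip u v h with ⟨hu, hv⟩ | ⟨hu, hv⟩
    · simp [hu, Finset.disjoint_right.mp hdisj hv]
    · simp [hv, Finset.disjoint_right.mp hdisj hu]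

lemma Coloring.even_length_iff_of_eq (c : G.Coloring Bool) {u v w : V} (p : G.Walk u v)
    (q : G.Walk u w) (h : c v = c w) : Even p.length ↔ Even q.length := by
  rw [c.even_length_iff_congr, c.even_length_iff_congr, h]

namespace Walk

variable {u v w z : V}

lemma getVert_mem_support_take (p : G.Walk u v) {i k : ℕ} (hk : k ≤ i) :
    p.getVert k ∈ (p.take i).support := by
  simpa [hk] using (p.take i).getVert_mem_support k

lemma getVert_mem_support_drop (p : G.Walk u v) {j k : ℕ} (hk : j ≤ k) :
    p.getVert k ∈ (p.drop j).support := by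
  simpa [hk] using (p.drop j).getVert_mem_support (k - j)

lemma IsPath.take_append_cons {p : G.Walk u v} (hp : p.IsPath) {i : ℕ} (hi : i < p.length)
    (h : G.Adj (p.getVert i) w) {r : G.Walk w z} (hr : r.IsPath)
    (hsub : r.support ⊆ (p.drop (i + 1)).support) : ((p.take i).append (cons h r)).IsPath := by
  refine IsPath.mk' ?_
  rw [support_append, support_cons, List.tail_cons, List.nodup_append']
  refine ⟨(hp.take i).support_nodup, hr.support_nodup, fun a ha hb => ?_⟩
  have hb := hsub hb
  rw [support_take] at ha
  rw [drop_support_eq_support_drop_min, min_eq_left hi] at hb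
  exact List.disjoint_take_drop hp.support_nodup le_rfl ha hb

lemma IsPath.exists_isCycle_of_adj {p : G.Walk u v} (hp : p.IsPath) {i j : ℕ}
    (hij : i + 2 ≤ j) (hj : j ≤ p.length) (h : G.Adj (p.getVert i) (p.getVert j)) :
    ∃ c : G.Walk (p.getVert j) (p.getVert j), c.IsCycle ∧ c.support ⊆ p.support ∧
      ∀ k, i ≤ k → k ≤ j → p.getVert k ∈ c.support := by
  have hend : (p.drop i).getVert (j - i) = p.getVert j := by
    rw [drop_getVert]; congr 1; omega
  let seg : G.Walk (p.getVert i) (p.getVert j) := ((p.drop i).take (j - i)).copy rfl hend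
  have hseg : seg.IsPath := by simpa [seg] using (hp.drop i).take (j - i)
  have hlen : seg.length = j - i := by
    simp only [seg, length_copy, take_length, drop_length]; omega
  refine ⟨cons h.symm seg, (cons_isCycle_iff _ _).mpr ⟨hseg, fun he => ?_⟩, ?_, ?_⟩
  · rw [Sym2.eq_swap] at he
    have := hseg.length_eq_one_of_mem_edges he
    omega
  · intro a ha
    rw [support_cons, List.mem_cons] at ha
    rcases ha with rfl | ha
    · exact p.getVert_mem_support j
    · simp only [seg, support_copy] at ha
      exact ((p.drop i).isSubwalk_take (j - i) |>.trans (p.isSubwalk_drop i)).support_subset ha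
  · intro k hik hkj
    have := (p.drop i).getVert_mem_support_take (i := j - i) (k := k - i) (by omega)
    simp only [drop_getVert, Nat.add_sub_cancel' hik] at this
    simpa [seg] using List.mem_cons_of_mem _ this

variable [DecidableEq V]

def FeasibleCycleFree (S : Finset V) (P : G.Walk u v) : Prop :=
  ¬ ∃ (w : V) (c : G.Walk w w), c.IsCycle ∧ c.support.toFinset ⊆ P.support.toFinset ∧
    2 ≤ (S ∩ c.support.toFinset).card

def NoShorterEvenPath (S : Finset V) (P : G.Walk u v) : Prop :=
  ¬ ∃ (a b : V) (Q : G.Walk a b), Q.IsPath ∧ Q.support.toFinset ⊆ P.support.toFinset ∧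
    Even Q.support.length ∧ Q.support.length < P.support.length ∧
    S ∩ Q.support.toFinset = S ∩ P.support.toFinset

variable {S : Finset V} {P : G.Walk u v}

lemma FeasibleCycleFree.eq_of_adj (hcyc : P.FeasibleCycleFree S) (hP : P.IsPath) {i j : ℕ}
    (hij : i + 2 ≤ j) (hj : j ≤ P.length) (h : G.Adj (P.getVert i) (P.getVert j)) {k l : ℕ}
    (hk : i ≤ k ∧ k ≤ j) (hl : i ≤ l ∧ l ≤ j) (hkS : P.getVert k ∈ S) (hlS : P.getVert l ∈ S) :
    k = l := by
  obtain ⟨c, hc, hsub, hmem⟩ := hP.exists_isCycle_of_adj hij hj h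
  by_contra hkl
  have hne : P.getVert k ≠ P.getVert l := fun he =>
    hkl (hP.getVert_injOn (show k ≤ P.length by omega) (show l ≤ P.length by omega) he)
  refine hcyc ⟨_, c, hc, fun a => by simpa using @hsub a, Finset.one_lt_card.mpr
    ⟨_, ?_, _, ?_, hne⟩⟩
  · simpa using ⟨hkS, hmem k hk.1 hk.2⟩
  · simpa using ⟨hlS, hmem l hl.1 hl.2⟩

lemma NoShorterEvenPath.length_le (hshort : P.NoShorterEvenPath S) {a b : V} {Q : G.Walk a b}
    (hQ : Q.IsPath) (hsub : Q.support ⊆ P.support) (heven : Even Q.support.length)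
    (hS : ∀ s ∈ S, s ∈ P.support → s ∈ Q.support) : P.length ≤ Q.length := by
  by_contra! hlt
  refine hshort ⟨a, b, Q, hQ, fun z => by simpa using @hsub z, heven, by simpa using hlt, ?_⟩
  ext s
  simp only [Finset.mem_inter, List.mem_toFinset]
  exact ⟨fun ⟨hs, hsQ⟩ => ⟨hs, hsub hsQ⟩, fun ⟨hs, hsP⟩ => ⟨hs, hS s hs hsP⟩⟩

/-- The shortcut `P₀ ⋯ Pᵢ w ⋯ z` ends on the side of `v`, so it has even order; being shorter
than `P`, it must miss an `S`-vertex of `P`, and the only vertices it can miss are `Pᵢ₊₁, …, Pⱼ₋₁`. -/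
lemma NoShorterEvenPath.exists_skipped_mem (c : G.Coloring Bool)
    (hshort : P.NoShorterEvenPath S) (hP : P.IsPath) (hPeven : Even P.support.length)
    {i j : ℕ} (hi : i < P.length) (h : G.Adj (P.getVert i) w) {r : G.Walk w z} (hr : r.IsPath)
    (hsub : r.support ⊆ (P.drop (i + 1)).support) (hcover : (P.drop j).support ⊆ r.support)
    (hlen : i + 1 + r.length < P.length) (hcol : c v = c z) :
    ∃ k, i < k ∧ k < j ∧ P.getVert k ∈ S := by
  by_contra! hS
  have hQ := hP.take_append_cons hi h hr hsub
  refine absurd (hshort.length_le hQ ?_ ?_ ?_)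
    (by simp only [length_append, take_length, length_cons]; omega)
  · intro a ha
    rw [support_append, support_cons, List.tail_cons, List.mem_append] at ha
    rcases ha with ha | ha
    · exact (P.isSubwalk_take i).support_subset ha
    · exact (P.isSubwalk_drop (i + 1)).support_subset (hsub ha)
  · rw [length_support, Nat.even_add_one, ← c.even_length_iff_of_eq P _ hcol,
      ← Nat.even_add_one, ← length_support]
    exact hPeven
  · intro s hs hsP
    obtain ⟨k, rfl, hk⟩ := mem_support_iff_exists_getVert.mp hsP
    rw [support_append, support_cons, List.tail_cons, List.mem_append]
    rcases le_or_gt k i with hki | hik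
    · exact Or.inl (P.getVert_mem_support_take hki)
    · exact Or.inr (hcover (P.getVert_mem_support_drop (not_lt.mp fun hkj => hS k hik hkj hs)))

lemma NoShorterEvenPath.not_adj_getVert (c : G.Coloring Bool) (hshort : P.NoShorterEvenPath S)
    (hcyc : P.FeasibleCycleFree S) (hP : P.IsPath) (hPeven : Even P.support.length) {i j : ℕ}
    (hij : i + 2 ≤ j) (hj : j ≤ P.length) (hS : P.getVert i ∈ S ∨ P.getVert j ∈ S) :
    ¬ G.Adj (P.getVert i) (P.getVert j) := by
  intro h
  obtain ⟨k, hik, hkj, hkS⟩ := hshort.exists_skipped_mem c hP hPeven (by omega) h (hP.drop j)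
    (P.drop_isSubwalk_drop (by omega)).support_subset (List.Subset.refl _)
    (by simp only [drop_length]; omega) rfl
  have hk : i ≤ k ∧ k ≤ j := ⟨hik.le, hkj.le⟩
  rcases hS with hS | hS
  · exact absurd (hcyc.eq_of_adj hP hij hj h hk ⟨le_rfl, by omega⟩ hkS hS) (by omega)
  · exact absurd (hcyc.eq_of_adj hP hij hj h hk ⟨by omega, le_rfl⟩ hkS hS) (by omega)

lemma NoShorterEvenPath.eq_of_adj_end (c : G.Coloring Bool) (hshort : P.NoShorterEvenPath S)
    (hcyc : P.FeasibleCycleFree S) (hP : P.IsPath) (hPeven : Even P.support.length)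
    (hpen : P.getVert (P.length - 1) ∈ S) {a b : ℕ} (ha : a + 1 < P.length)
    (hb : b + 1 < P.length) (hav : G.Adj (P.getVert a) v) (hbv : G.Adj (P.getVert b) v) :
    a = b := by
  wlog hab : a < b generalizing a b
  · rcases Nat.lt_or_ge b a with hba | hba
    · exact (this hb ha hbv hav hba).symm
    · omega
  have hchord : G.Adj (P.getVert a) (P.getVert P.length) := by rwa [getVert_length]
  have hcol : c v = c (P.getVert (b + 1)) := by
    have h₁ := c.valid hbv
    have h₂ := c.valid (P.adj_getVert_succ (i := b) (by omega))
    revert h₁ h₂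
    cases c v <;> cases c (P.getVert b) <;> cases c (P.getVert (b + 1)) <;> simp
  obtain ⟨k, hak, hkb, hkS⟩ := hshort.exists_skipped_mem c hP hPeven (j := b + 1) (by omega) hav
    (hP.drop (b + 1)).reverse
    (by simpa using (P.drop_isSubwalk_drop (by omega : a + 1 ≤ b + 1)).support_subset)
    (by simp) (by simp only [length_reverse, drop_length]; omega) hcol
  have := hcyc.eq_of_adj hP (by omega) le_rfl hchord ⟨hak.le, by omega⟩ ⟨by omega, by omega⟩
    hkS hpen
  omega

lemma NoShorterEvenPath.adj_getVert_of_mem (c : G.Coloring Bool)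
    (hshort : P.NoShorterEvenPath S) (hcyc : P.FeasibleCycleFree S) (hP : P.IsPath)
    (hPeven : Even P.support.length) {k l : ℕ} (hk : k ≤ P.length) (hl : l ≤ P.length)
    (hkS : P.getVert k ∈ S) (h : G.Adj (P.getVert k) (P.getVert l)) : l + 1 = k ∨ l = k + 1 := by
  have hne : l ≠ k := by rintro rfl; exact h.ne rfl
  by_contra! hfar
  rcases Nat.lt_or_gt_of_ne hne with hlk | hkl
  · exact hshort.not_adj_getVert c hcyc hP hPeven (by omega) hk (Or.inr hkS) h.symm
  · exact hshort.not_adj_getVert c hcyc hP hPeven (by omega) hl (Or.inl hkS) h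

variable [DecidableRel G.Adj]

lemma NoShorterEvenPath.card_filter_adj_start (c : G.Coloring Bool)
    (hshort : P.NoShorterEvenPath S) (hcyc : P.FeasibleCycleFree S) (hP : P.IsPath)
    (hPeven : Even P.support.length) (hu : u ∈ S) :
    (P.support.toFinset.filter (G.Adj u ·)).card = 1 := by
  have hlen : 0 < P.length := by
    rw [length_support, Nat.even_add_one] at hPeven
    exact Nat.pos_of_ne_zero fun h => by simp [h] at hPeven
  rw [Finset.card_eq_one]
  refine ⟨P.getVert 1, Finset.ext fun w => ?_⟩
  simp only [Finset.mem_filter, List.mem_toFinset, Finset.mem_singleton]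
  constructor
  · rintro ⟨hw, h⟩
    obtain ⟨l, rfl, hl⟩ := mem_support_iff_exists_getVert.mp hw
    have := hshort.adj_getVert_of_mem c hcyc hP hPeven (Nat.zero_le _) hl (by simpa using hu)
      (by simpa using h)
    rw [show l = 1 by omega]
  · rintro rfl
    exact ⟨P.getVert_mem_support 1, by simpa using P.adj_getVert_succ hlen⟩

lemma NoShorterEvenPath.card_filter_adj_of_mem (c : G.Coloring Bool)
    (hshort : P.NoShorterEvenPath S) (hcyc : P.FeasibleCycleFree S) (hP : P.IsPath)
    (hPeven : Even P.support.length) {k : ℕ} (hk₀ : 0 < k) (hk : k < P.length)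
    (hkS : P.getVert k ∈ S) :
    (P.support.toFinset.filter (G.Adj (P.getVert k) ·)).card = 2 := by
  have hne : P.getVert (k - 1) ≠ P.getVert (k + 1) := fun he =>
    absurd (hP.getVert_injOn (show k - 1 ≤ P.length by omega) (show k + 1 ≤ P.length by omega) he)
      (by omega)
  rw [Finset.card_eq_two]
  refine ⟨P.getVert (k - 1), P.getVert (k + 1), hne, Finset.ext fun w => ?_⟩
  simp only [Finset.mem_filter, List.mem_toFinset, Finset.mem_insert, Finset.mem_singleton]
  constructor
  · rintro ⟨hw, h⟩
    obtain ⟨l, rfl, hl⟩ := mem_support_iff_exists_getVert.mp hw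
    rcases hshort.adj_getVert_of_mem c hcyc hP hPeven hk.le hl hkS h with hlk | hlk
    · exact Or.inl (by rw [show l = k - 1 by omega])
    · exact Or.inr (by rw [hlk])
  · have hprev := P.adj_getVert_succ (i := k - 1) (by omega)
    rw [Nat.sub_add_cancel hk₀] at hprev
    rintro (rfl | rfl)
    · exact ⟨P.getVert_mem_support _, hprev.symm⟩
    · exact ⟨P.getVert_mem_support _, P.adj_getVert_succ hk⟩

lemma NoShorterEvenPath.card_filter_adj_end_le (c : G.Coloring Bool)
    (hshort : P.NoShorterEvenPath S) (hcyc : P.FeasibleCycleFree S) (hP : P.IsPath)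
    (hPeven : Even P.support.length) (hpen : P.getVert (P.length - 1) ∈ S) :
    (P.support.toFinset.filter (G.Adj v ·)).card ≤ 2 := by
  set N := P.support.toFinset.filter (G.Adj v ·)
  have hlt : ∀ w ∈ N.erase (P.getVert (P.length - 1)),
      ∃ i, i + 1 < P.length ∧ P.getVert i = w ∧ G.Adj w v := by
    intro w hw
    simp only [N, Finset.mem_erase, Finset.mem_filter, List.mem_toFinset] at hw
    obtain ⟨hpen', hwP, hvw⟩ := hw
    obtain ⟨i, rfl, hi⟩ := mem_support_iff_exists_getVert.mp hwP
    refine ⟨i, ?_, rfl, hvw.symm⟩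
    have hin : i ≠ P.length := by rintro rfl; exact hvw.ne (P.getVert_length).symm
    have hipen : i ≠ P.length - 1 := by rintro rfl; exact hpen' rfl
    omega
  have hle : (N.erase (P.getVert (P.length - 1))).card ≤ 1 := by
    refine Finset.card_le_one.mpr fun a ha b hb => ?_
    obtain ⟨i, hi, rfl, hav⟩ := hlt a ha
    obtain ⟨j, hj, rfl, hbv⟩ := hlt b hb
    rw [hshort.eq_of_adj_end c hcyc hP hPeven hpen hi hj hav hbv]
  have := Finset.pred_card_le_card_erase (s := N) (a := P.getVert (P.length - 1))
  omega

end Walk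
end SimpleGraph

open SimpleGraph Walk

theorem path_degrees_general {V : Type*} [DecidableEq V]
    (G : SimpleGraph V) [DecidableRel G.Adj]
    (X Y S : Finset V)
    (hdisj : Disjoint X Y)
    (hbip : ∀ u v : V, G.Adj u v → (u ∈ X ∧ v ∈ Y) ∨ (u ∈ Y ∧ v ∈ X))
    (hSX : S ⊆ X)
    (x₁ xp yp : V) (P : G.Walk x₁ yp) (hP : P.IsPath)
    (hPeven : Even P.support.length)
    (l : List V) (hsplit : P.support = l ++ [xp, yp])
    (hx₁ : x₁ ∈ S) (hxp : xp ∈ S)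
    (hnocycle : ¬ ∃ (u : V) (c : G.Walk u u), c.IsCycle ∧
      c.support.toFinset ⊆ P.support.toFinset ∧
      2 ≤ (S ∩ c.support.toFinset).card)
    (hnoshort : ¬ ∃ (a b : V) (Q : G.Walk a b), Q.IsPath ∧
      Q.support.toFinset ⊆ P.support.toFinset ∧
      Even Q.support.length ∧ Q.support.length < P.support.length ∧
      S ∩ Q.support.toFinset = S ∩ P.support.toFinset) :
    (P.support.toFinset.filter (fun u => G.Adj x₁ u)).card = 1 ∧
    (∀ x ∈ S, x ∈ P.support → x ≠ x₁ →
      (P.support.toFinset.filter (fun u => G.Adj x u)).card = 2) ∧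
    (P.support.toFinset.filter (fun u => G.Adj yp u)).card ≤ 2 := by
  let c := Coloring.ofBipartition hdisj hbip
  have hshort : P.NoShorterEvenPath S := hnoshort
  have hyp : yp ∉ X := by
    have hodd : Odd P.length := by
      simpa [length_support, Nat.even_add_one] using hPeven
    have hc : ∀ v, c v = decide (v ∈ X) := fun _ => rfl
    simpa [hc, hSX hx₁] using (c.odd_length_iff_not_congr P).mp hodd
  have hpen : P.getVert (P.length - 1) = xp := by
    have hlen : P.length = l.length + 1 := by simpa using congrArg List.length hsplit
    rw [P.getVert_eq_support_getElem (by omega)]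
    simp [hsplit, hlen]
  refine ⟨hshort.card_filter_adj_start c hnocycle hP hPeven hx₁, fun x hxS hxP hx => ?_,
    hshort.card_filter_adj_end_le c hnocycle hP hPeven (hpen ▸ hxp)⟩
  obtain ⟨k, rfl, hk⟩ := mem_support_iff_exists_getVert.mp hxP
  refine hshort.card_filter_adj_of_mem c hnocycle hP hPeven ?_ ?_ hxS
  · exact Nat.pos_of_ne_zero (by rintro rfl; simp at hx)
  · exact lt_of_le_of_ne hk (by rintro rfl; exact hyp (hSX (by simpa using hxS)))

/-- Lemma 5: let P = x₁y₁⋯x_p y_p be a path of even order (p ≥ 2) with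
x₁, x_p ∈ S, such that G[V(P)] contains no feasible cycle and no shorter path
of even order with the same set of S-vertices. Then, in G[V(P)],
d(x₁) = 1, d(x) = 2 for every x ∈ S ∩ V(P) with x ≠ x₁, and d(y_p) ≤ 2. -/
theorem path_degrees {V : Type*} [Fintype V] [DecidableEq V]
    (G : SimpleGraph V) [DecidableRel G.Adj]
    (X Y S : Finset V)
    (hdisj : Disjoint X Y) (hcover : X ∪ Y = Finset.univ)
    (hbip : ∀ u v : V, G.Adj u v → (u ∈ X ∧ v ∈ Y) ∨ (u ∈ Y ∧ v ∈ X))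
    (hSX : S ⊆ X)
    (x₁ xp yp : V) (P : G.Walk x₁ yp) (hP : P.IsPath)
    (hPeven : Even P.support.length) (hPlen : 4 ≤ P.support.length)
    (l : List V) (hsplit : P.support = l ++ [xp, yp])
    (hx₁ : x₁ ∈ S) (hxp : xp ∈ S)
    (hnocycle : ¬ ∃ (u : V) (c : G.Walk u u), c.IsCycle ∧
      c.support.toFinset ⊆ P.support.toFinset ∧
      2 ≤ (S ∩ c.support.toFinset).card)
    (hnoshort : ¬ ∃ (a b : V) (Q : G.Walk a b), Q.IsPath ∧
      Q.support.toFinset ⊆ P.support.toFinset ∧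
      Even Q.support.length ∧ Q.support.length < P.support.length ∧
      S ∩ Q.support.toFinset = S ∩ P.support.toFinset) :
    (P.support.toFinset.filter (fun u => G.Adj x₁ u)).card = 1 ∧
    (∀ x ∈ S, x ∈ P.support → x ≠ x₁ →
      (P.support.toFinset.filter (fun u => G.Adj x u)).card = 2) ∧
    (P.support.toFinset.filter (fun u => G.Adj yp u)).card ≤ 2 :=
  path_degrees_general G X Y S hdisj hbip hSX x₁ xp yp P hP hPeven l hsplit hx₁ hxp hnocycle
    hnoshort
end

section
/- Let G be a balanced bipartite graph of order 2n with bipartition (X,Y), let x ∈ X have exactly one neighbor in Y, and suppose G[X \ {x}, Y] is complete bipartite. Let S ⊆ X with x ∈ S. Then every nonadjacent pair u ∈ S, y ∈ Y satisfies d(u) + d(y) ≥ n, but for every positive integer k, G does not contain k disjoint cycles covering S each with at least two vertices of S (since no cycle of G passes through x). -/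
/-!
Every vertex of `X` other than `x` is adjacent to every `y ∈ Y`, so the only nonadjacent pairs
are `(x, y)`, and there `d(x) + d(y) ≥ 1 + (n - 1)`. On the other hand every vertex of a cycle
has degree at least two, so the degree-one vertex `x ∈ S` lies on no cycle.
-/

namespace SimpleGraph

variable {V : Type*} {G : SimpleGraph V} [Fintype V] [DecidableRel G.Adj]

theorem card_le_degree_of_forall_adj [DecidableEq V] {s : Finset V} {y : V}
    (hs : ∀ u ∈ s, G.Adj y u) : s.card ≤ G.degree y :=
  Finset.card_le_card fun u hu ↦ (G.mem_neighborFinset y u).2 (hs u hu)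

namespace Walk

theorem IsCycle.two_le_degree {u : V} {c : G.Walk u u} (hc : c.IsCycle) :
    2 ≤ G.degree u := by
  have hnil := hc.not_nil
  refine Finset.one_lt_card.2 ⟨c.snd, ?_, c.penultimate, ?_, hc.snd_ne_penultimate⟩
  · exact (G.mem_neighborFinset _ _).2 (c.adj_snd hnil)
  · exact (G.mem_neighborFinset _ _).2 (c.adj_penultimate hnil).symm

theorem IsCycle.two_le_degree_of_mem_support [DecidableEq V] {u w : V} {c : G.Walk u u} (hc : c.IsCycle)
    (hw : w ∈ c.support) : 2 ≤ G.degree w :=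
  (hc.rotate hw).two_le_degree

end Walk

end SimpleGraph

theorem degree_n_not_sufficient_general {V : Type*} [Fintype V] [DecidableEq V]
    (G : SimpleGraph V) [DecidableRel G.Adj]
    (X Y S : Finset V) (n : ℕ)
    (hX : X.card = n)
    (x : V) (hx : x ∈ X) (hdx : G.degree x = 1)
    (hcomplete : ∀ u ∈ X, u ≠ x → ∀ y ∈ Y, G.Adj u y)
    (hSX : S ⊆ X) (hxS : x ∈ S) :
    (∀ u ∈ S, ∀ y ∈ Y, ¬ G.Adj u y → n ≤ G.degree u + G.degree y) ∧
    (∀ k : ℕ, 0 < k →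
      ¬ ∃ (v : Fin k → V) (c : ∀ i, G.Walk (v i) (v i)),
          (∀ i, (c i).IsCycle) ∧
          (∀ i j, i ≠ j → Disjoint (c i).support.toFinset (c j).support.toFinset) ∧
          (∀ i, 2 ≤ (S ∩ (c i).support.toFinset).card) ∧
          (∀ s ∈ S, ∃ i, s ∈ (c i).support)) := by
  constructor
  · intro u hu y hy hnadj
    obtain rfl : u = x := by
      by_contra hux
      exact hnadj (hcomplete u (hSX hu) hux y hy)
    have hdy : (X.erase u).card ≤ G.degree y :=
      SimpleGraph.card_le_degree_of_forall_adj fun w hw ↦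
        (hcomplete w (Finset.mem_of_mem_erase hw) (Finset.ne_of_mem_erase hw) y hy).symm
    rw [Finset.card_erase_of_mem hx, hX] at hdy
    omega
  · rintro k - ⟨v, c, hcycle, -, -, hcovers⟩
    obtain ⟨i, hxi⟩ := hcovers x hxS
    have := (hcycle i).two_le_degree_of_mem_support hxi
    omega

/-- Example 3: if x ∈ X has exactly one neighbor and G[X \ {x}, Y] is complete
bipartite, with x ∈ S ⊆ X, then every nonadjacent pair u ∈ S, y ∈ Y satisfies
d(u) + d(y) ≥ n, yet for no positive k does G contain k disjoint cycles
covering S each with at least two S-vertices. -/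
theorem degree_n_not_sufficient {V : Type*} [Fintype V] [DecidableEq V]
    (G : SimpleGraph V) [DecidableRel G.Adj]
    (X Y S : Finset V) (n : ℕ) (hn : 2 ≤ n)
    (hdisj : Disjoint X Y) (hcover : X ∪ Y = Finset.univ)
    (hX : X.card = n) (hY : Y.card = n)
    (hbip : ∀ u v : V, G.Adj u v → (u ∈ X ∧ v ∈ Y) ∨ (u ∈ Y ∧ v ∈ X))
    (x : V) (hx : x ∈ X) (hdx : G.degree x = 1)
    (hcomplete : ∀ u ∈ X, u ≠ x → ∀ y ∈ Y, G.Adj u y)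
    (hSX : S ⊆ X) (hxS : x ∈ S) :
    (∀ u ∈ S, ∀ y ∈ Y, ¬ G.Adj u y → n ≤ G.degree u + G.degree y) ∧
    (∀ k : ℕ, 0 < k →
      ¬ ∃ (v : Fin k → V) (c : ∀ i, G.Walk (v i) (v i)),
          (∀ i, (c i).IsCycle) ∧
          (∀ i j, i ≠ j → Disjoint (c i).support.toFinset (c j).support.toFinset) ∧
          (∀ i, 2 ≤ (S ∩ (c i).support.toFinset).card) ∧
          (∀ s ∈ S, ∃ i, s ∈ (c i).support)) :=
  degree_n_not_sufficient_general G X Y S n hX x hx hdx hcomplete hSX hxS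
end
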